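/- arXiv:2302.12543 — 11 statements merged into one kernel-verified Lean document; each statement's English description precedes it below -/
import Mathlib

section
/- Let d ≥ 1 and let Γ : ℝ^d × ℝ^d → ℝ^d be a bilinear map with coefficients Γ^i_{jk} defined by Γ(e_j, e_k) = Σ_i Γ^i_{jk} e_i, where (e_1,…,e_d) is the canonical basis of ℝ^d. The following are equivalent: (1) for every v ∈ ℝ^d, Γ(v,v) is a scalar multiple of v; (2) for all i ≠ j one has Γ^i_{ii} = Γ^j_{ij} + Γ^j_{ji}, and for all i, j and every k ∉ {i,j} one has Γ^k_{ij} + Γ^k_{ji} = 0. Moreover, when these conditions hold, Γ(v,v) = (Σ_i Γ^i_{ii} v_i) · v for every v ∈ ℝ^d. -/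
/-!
Let `S(u, w) = Γ(u, w) + Γ(w, u)` be the symmetrization of `Γ`, so that `Γ(v, v) = S(v, v) / 2`,
and let `a_i = Γ^i_{ii}`. Condition (2) says exactly that `S(e_i, e_j) = a_j e_i + a_i e_j` for
all `i, j`; by bilinearity this is `S(u, w) = α(u) w + α(w) u` with `α(v) = Σ a_i v_i`, whence
`Γ(v, v) = α(v) v`. Conversely, if every `Γ(v, v)` is a multiple of `v`, then `Γ(e_i, e_i) = a_i e_i`,
and comparing `Γ(e_i ± e_j, e_i ± e_j)` with multiples of `e_i ± e_j` gives the formula for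
`S(e_i, e_j)`, since `e_i, e_j` are linearly independent.
-/

open Module

namespace LinearMap

variable {K V : Type*} [Field K] [CharZero K] [AddCommGroup V] [Module K V]

theorem add_flip_eq_of_forall_exists_smul (Γ : V →ₗ[K] V →ₗ[K] V)
    (h : ∀ v, ∃ c : K, Γ v v = c • v) {p q : V} (hpq : LinearIndependent K ![p, q])
    {a b : K} (hp : Γ p p = a • p) (hq : Γ q q = b • q) :
    Γ p q + Γ q p = b • p + a • q := by
  -- `Γ(p + q, p + q) + Γ(p - q, p - q) = 2a p + 2b q`, so independence gives `c = a + b`.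
  obtain ⟨c, hc⟩ := h (p + q)
  obtain ⟨c', hc'⟩ := h (p - q)
  simp only [map_add, map_sub, add_apply, sub_apply, hp, hq] at hc hc'
  have hsum : Γ p q + Γ q p = (c - a) • p + (c - b) • q := by
    linear_combination (norm := module) hc
  obtain ⟨h₁, h₂⟩ := LinearIndependent.pair_iff.1 hpq (c + c' - 2 * a) (c - c' - 2 * b)
    (by linear_combination (norm := module) -(hc + hc'))
  rw [hsum]
  congr 2 <;> linear_combination (h₁ + h₂) / 2

variable {ι : Type*} [Fintype ι]

theorem apply_self_eq_smul_of_add_flip_basis (Γ : V →ₗ[K] V →ₗ[K] V) (b : Basis ι K V)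
    (a : ι → K) (h : ∀ i j, Γ (b i) (b j) + Γ (b j) (b i) = a j • b i + a i • b j) (v : V) :
    Γ v v = (∑ i, a i * b.repr v i) • v := by
  set α := b.constr K a
  have hsymm : Γ + Γ.flip = lsmul K V ∘ₗ α + (lsmul K V ∘ₗ α).flip :=
    ext_basis b b fun i j => by
      simp only [add_apply, flip_apply, comp_apply, lsmul_apply, α, Basis.constr_basis, h, add_comm]
  have hv : (2 : K) • Γ v v = (2 : K) • (α v • v) := by
    simpa [two_smul] using congr($hsymm v v)
  rw [smul_right_injective V (two_ne_zero : (2 : K) ≠ 0) hv, b.constr_apply_fintype K]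
  simp [mul_comm]

theorem forall_exists_smul_iff_add_flip_basis (Γ : V →ₗ[K] V →ₗ[K] V) (b : Basis ι K V) :
    (∀ v, ∃ c : K, Γ v v = c • v) ↔ ∀ i j, Γ (b i) (b j) + Γ (b j) (b i) =
      b.repr (Γ (b j) (b j)) j • b i + b.repr (Γ (b i) (b i)) i • b j := by
  refine ⟨fun h i j => ?_, fun h v => ⟨_, apply_self_eq_smul_of_add_flip_basis Γ b _ h v⟩⟩
  have hdiag : ∀ i, Γ (b i) (b i) = b.repr (Γ (b i) (b i)) i • b i := fun i => by
    obtain ⟨c, hc⟩ := h (b i)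
    simp [hc]
  rcases eq_or_ne i j with rfl | hij
  · rw [← hdiag]
  · refine add_flip_eq_of_forall_exists_smul Γ h ?_ (hdiag i) (hdiag j)
    exact LinearIndependent.pair_iff.2 <|
      (LinearIndepOn.pair_iff b hij).1 (b.linearIndependent.linearIndepOn _)

theorem apply_self_eq_smul_of_forall_exists_smul (Γ : V →ₗ[K] V →ₗ[K] V) (b : Basis ι K V)
    (h : ∀ v, ∃ c : K, Γ v v = c • v) (v : V) :
    Γ v v = (∑ i, b.repr (Γ (b i) (b i)) i * b.repr v i) • v :=
  apply_self_eq_smul_of_add_flip_basis Γ b _ ((forall_exists_smul_iff_add_flip_basis Γ b).1 h) v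

end LinearMap

theorem Pi.add_flip_single_eq_iff {K ι : Type*} [Field K] [DecidableEq ι]
    (Γ : (ι → K) →ₗ[K] (ι → K) →ₗ[K] (ι → K)) :
    (∀ i j, Γ (Pi.single i 1) (Pi.single j 1) + Γ (Pi.single j 1) (Pi.single i 1) =
        Γ (Pi.single j 1) (Pi.single j 1) j • Pi.single i 1 +
          Γ (Pi.single i 1) (Pi.single i 1) i • Pi.single j 1) ↔
      (∀ i j, i ≠ j → Γ (Pi.single i 1) (Pi.single i 1) i =
          Γ (Pi.single i 1) (Pi.single j 1) j + Γ (Pi.single j 1) (Pi.single i 1) j) ∧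
        ∀ i j k, k ≠ i → k ≠ j →
          Γ (Pi.single i 1) (Pi.single j 1) k + Γ (Pi.single j 1) (Pi.single i 1) k = 0 := by
  simp only [funext_iff, Pi.add_apply, Pi.smul_apply, Pi.single_apply, smul_eq_mul, mul_ite,
    mul_one, mul_zero]
  constructor
  · intro h
    refine ⟨fun i j hij => ?_, fun i j k hki hkj => ?_⟩
    · simpa [hij.symm] using (h i j j).symm
    · simpa [hki, hkj] using h i j k
  · rintro ⟨h₁, h₂⟩ i j k
    rcases eq_or_ne k i with rfl | hki <;> rcases eq_or_ne k j with rfl | hkj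
    · simp only [if_true]
    · simp only [if_true, if_neg hkj, add_zero]
      rw [add_comm, h₁ j k hkj.symm]
    · simp only [if_true, if_neg hki, zero_add]
      rw [h₁ i k hki.symm]
    · simp only [if_neg hki, if_neg hkj, add_zero]
      exact h₂ i j k hki hkj

theorem stmt0_general (d : ℕ)
    (Γ : (Fin d → ℝ) →ₗ[ℝ] (Fin d → ℝ) →ₗ[ℝ] (Fin d → ℝ)) :
    ((∀ v : Fin d → ℝ, ∃ c : ℝ, Γ v v = c • v) ↔
      ((∀ i j : Fin d, i ≠ j →
          Γ (Pi.single i 1) (Pi.single i 1) i =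
            Γ (Pi.single i 1) (Pi.single j 1) j + Γ (Pi.single j 1) (Pi.single i 1) j) ∧
        (∀ i j k : Fin d, k ≠ i → k ≠ j →
          Γ (Pi.single i 1) (Pi.single j 1) k + Γ (Pi.single j 1) (Pi.single i 1) k = 0))) ∧
    ((∀ v : Fin d → ℝ, ∃ c : ℝ, Γ v v = c • v) →
      ∀ v : Fin d → ℝ,
        Γ v v = (∑ i, Γ (Pi.single i 1) (Pi.single i 1) i * v i) • v) := by
  have hbasis := LinearMap.forall_exists_smul_iff_add_flip_basis Γ (Pi.basisFun ℝ (Fin d))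
  have hformula := LinearMap.apply_self_eq_smul_of_forall_exists_smul Γ (Pi.basisFun ℝ (Fin d))
  simp only [Pi.basisFun_apply, Pi.basisFun_repr] at hbasis hformula
  exact ⟨hbasis.trans (Pi.add_flip_single_eq_iff Γ), hformula⟩

/-- Characterization of bilinear maps `Γ` on `ℝ^d` such that `Γ(v,v)` is always
colinear to `v` (i.e., whose geodesics are straight lines in the chart), in terms of
the Christoffel symbols `Γ^i_{jk} = (Γ e_j e_k) i`, together with the explicit formula
`Γ(v,v) = (Σ_i Γ^i_{ii} v_i) • v` when these conditions hold. -/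
theorem stmt0 (d : ℕ) (hd : 1 ≤ d)
    (Γ : (Fin d → ℝ) →ₗ[ℝ] (Fin d → ℝ) →ₗ[ℝ] (Fin d → ℝ)) :
    ((∀ v : Fin d → ℝ, ∃ c : ℝ, Γ v v = c • v) ↔
      ((∀ i j : Fin d, i ≠ j →
          Γ (Pi.single i 1) (Pi.single i 1) i =
            Γ (Pi.single i 1) (Pi.single j 1) j + Γ (Pi.single j 1) (Pi.single i 1) j) ∧
        (∀ i j k : Fin d, k ≠ i → k ≠ j →
          Γ (Pi.single i 1) (Pi.single j 1) k + Γ (Pi.single j 1) (Pi.single i 1) k = 0))) ∧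
    ((∀ v : Fin d → ℝ, ∃ c : ℝ, Γ v v = c • v) →
      ∀ v : Fin d → ℝ,
        Γ v v = (∑ i, Γ (Pi.single i 1) (Pi.single i 1) i * v i) • v) :=
  stmt0_general d Γ
end

section
/- Let d ≥ 1 and let Γ : ℝ^d × ℝ^d → ℝ^d be a symmetric bilinear map (Γ(u,v) = Γ(v,u) for all u,v). The following are equivalent: (1) for every v ∈ ℝ^d, Γ(v,v) is a scalar multiple of v; (2) there exists a linear form a on ℝ^d such that Γ(u,v) = a(v)·u + a(u)·v for all u,v. Moreover, in that case the linear form a is unique and its coefficients satisfy a_i = Γ^i_{ii}/2, equivalently Γ^k_{ij} = δ_{ik} a_j + δ_{jk} a_i for all i,j,k, where δ is the Kronecker symbol. -/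
/-!
Polarizing at `u + v` and `u - v`, for linearly independent `u, v` with `Γ(u,u) = α u` and
`Γ(v,v) = β v`, and comparing coefficients gives `2 Γ(u,v) = β u + α v`. On a basis `(b i)` with
`Γ(b i, b i) = c i • b i` this says that `Γ` agrees with `(u, v) ↦ a v • u + a u • v` for the linear
form `a` with `a (b i) = c i / 2`. Conversely `Γ(v,v) = 2 a(v) v`, which also determines `a`.
-/

theorem Module.Basis.linearIndependent_pair {ι K V : Type*} [Field K] [AddCommGroup V]
    [Module K V] (b : Module.Basis ι K V) {i j : ι} (hij : i ≠ j) :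
    LinearIndependent K ![b i, b j] :=
  LinearIndependent.pair_iff.mpr <|
    (LinearIndepOn.pair_iff b hij).mp (b.linearIndependent.linearIndepOn _)

namespace LinearMap

section Field

variable {K V : Type*} [Field K] [NeZero (2 : K)] [AddCommGroup V] [Module K V]
  {Γ : V →ₗ[K] V →ₗ[K] V}

theorem two_smul_apply_eq_of_linearIndependent (hsym : ∀ u v, Γ u v = Γ v u)
    (hΓ : ∀ v, ∃ c : K, Γ v v = c • v) {u v : V} (huv : LinearIndependent K ![u, v])
    {α β : K} (hu : Γ u u = α • u) (hv : Γ v v = β • v) :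
    (2 : K) • Γ u v = β • u + α • v := by
  obtain ⟨l, hl⟩ := hΓ (u + v)
  obtain ⟨m, hm⟩ := hΓ (u - v)
  simp only [map_add, map_sub, add_apply, sub_apply, hu, hv, hsym v u] at hl hm
  have hsum : (2 * α - (l + m)) • u + (2 * β - (l - m)) • v = 0 := by
    linear_combination (norm := module) hl + hm
  obtain ⟨hα, hβ⟩ := LinearIndependent.pair_iff.mp huv _ _ hsum
  apply smul_right_injective V (two_ne_zero (α := K))
  linear_combination (norm := module) hl - hm - hβ • u - hα • v

theorem exists_apply_eq_smul_add_smul (hsym : ∀ u v, Γ u v = Γ v u)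
    (hΓ : ∀ v, ∃ c : K, Γ v v = c • v) :
    ∃ a : V →ₗ[K] K, ∀ u v, Γ u v = a v • u + a u • v := by
  let b := Module.Basis.ofVectorSpace K V
  choose c hc using fun i => hΓ (b i)
  let a := b.constr K fun i => c i / 2
  have hab : ∀ i j, Γ (b i) (b j) = a (b j) • b i + a (b i) • b j := by
    intro i j
    have h2 : (2 : K) • Γ (b i) (b j) = c j • b i + c i • b j := by
      rcases eq_or_ne i j with rfl | hij
      · rw [hc, two_smul]
      · exact two_smul_apply_eq_of_linearIndependent hsym hΓ (b.linearIndependent_pair hij)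
          (hc i) (hc j)
    apply smul_right_injective V (two_ne_zero (α := K))
    simp only [a, b.constr_basis, h2, smul_add, smul_smul,
      mul_div_cancel₀ _ (two_ne_zero (α := K))]
  refine ⟨a, fun u v => ?_⟩
  suffices Γ = smulRightₗ a + a.smulRight LinearMap.id by simp [this]
  exact ext_basis b b fun i j => by simp [hab]

theorem forall_exists_apply_self_eq_smul_iff (hsym : ∀ u v, Γ u v = Γ v u) :
    (∀ v, ∃ c : K, Γ v v = c • v) ↔ ∃ a : V →ₗ[K] K, ∀ u v, Γ u v = a v • u + a u • v := by
  refine ⟨exists_apply_eq_smul_add_smul hsym, fun ⟨a, ha⟩ v => ⟨2 * a v, ?_⟩⟩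
  rw [ha, two_mul, add_smul]

theorem eq_of_apply_eq_smul_add_smul {a a' : V →ₗ[K] K}
    (ha : ∀ u v, Γ u v = a v • u + a u • v) (ha' : ∀ u v, Γ u v = a' v • u + a' u • v) :
    a = a' := by
  ext v
  rcases eq_or_ne v 0 with rfl | hv
  · simp
  have h : (2 * a v) • v = (2 * a' v) • v := by
    simpa only [two_mul, add_smul] using (ha v v).symm.trans (ha' v v)
  exact mul_left_cancel₀ two_ne_zero (smul_left_injective K hv h)

end Field

theorem apply_single_single_apply {ι R : Type*} [CommSemiring R] [DecidableEq ι]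
    {Γ : (ι → R) →ₗ[R] (ι → R) →ₗ[R] (ι → R)} {a : (ι → R) →ₗ[R] R}
    (ha : ∀ u v, Γ u v = a v • u + a u • v) (i j k : ι) :
    Γ (Pi.single i 1) (Pi.single j 1) k =
      (if i = k then a (Pi.single j 1) else 0) + (if j = k then a (Pi.single i 1) else 0) := by
  simp [ha, Pi.single_apply, eq_comm]

theorem apply_single_eq_half {ι K : Type*} [Field K] [NeZero (2 : K)] [DecidableEq ι]
    {Γ : (ι → K) →ₗ[K] (ι → K) →ₗ[K] (ι → K)} {a : (ι → K) →ₗ[K] K}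
    (ha : ∀ u v, Γ u v = a v • u + a u • v) (i : ι) :
    a (Pi.single i 1) = Γ (Pi.single i 1) (Pi.single i 1) i / 2 := by
  rw [apply_single_single_apply ha, if_pos rfl, ← two_mul, mul_div_cancel_left₀ _ two_ne_zero]

end LinearMap

theorem stmt1_general (d : ℕ)
    (Γ : (Fin d → ℝ) →ₗ[ℝ] (Fin d → ℝ) →ₗ[ℝ] (Fin d → ℝ))
    (hsym : ∀ u v : Fin d → ℝ, Γ u v = Γ v u) :
    ((∀ v : Fin d → ℝ, ∃ c : ℝ, Γ v v = c • v) ↔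
      (∃ a : (Fin d → ℝ) →ₗ[ℝ] ℝ, ∀ u v : Fin d → ℝ, Γ u v = a v • u + a u • v)) ∧
    (∀ a : (Fin d → ℝ) →ₗ[ℝ] ℝ, (∀ u v : Fin d → ℝ, Γ u v = a v • u + a u • v) →
      (∀ a' : (Fin d → ℝ) →ₗ[ℝ] ℝ, (∀ u v : Fin d → ℝ, Γ u v = a' v • u + a' u • v) →
        a' = a) ∧
      (∀ i : Fin d,
        a (Pi.single i 1) = Γ (Pi.single i 1) (Pi.single i 1) i / 2) ∧
      (∀ i j k : Fin d,
        Γ (Pi.single i 1) (Pi.single j 1) k =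
          (if i = k then a (Pi.single j 1) else 0) +
            (if j = k then a (Pi.single i 1) else 0))) :=
  ⟨LinearMap.forall_exists_apply_self_eq_smul_iff hsym, fun _ ha =>
    ⟨fun _ ha' => LinearMap.eq_of_apply_eq_smul_add_smul ha' ha,
      LinearMap.apply_single_eq_half ha, LinearMap.apply_single_single_apply ha⟩⟩

/-- For a symmetric bilinear map `Γ` on `ℝ^d`, the condition that `Γ(v,v)` is always
colinear to `v` is equivalent to the existence of a linear form `a` with
`Γ(u,v) = a(v)•u + a(u)•v`; moreover such an `a` is unique, with
`a_i = Γ^i_{ii}/2`, equivalently `Γ^k_{ij} = δ_{ik} a_j + δ_{jk} a_i`. -/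
theorem stmt1 (d : ℕ) (hd : 1 ≤ d)
    (Γ : (Fin d → ℝ) →ₗ[ℝ] (Fin d → ℝ) →ₗ[ℝ] (Fin d → ℝ))
    (hsym : ∀ u v : Fin d → ℝ, Γ u v = Γ v u) :
    ((∀ v : Fin d → ℝ, ∃ c : ℝ, Γ v v = c • v) ↔
      (∃ a : (Fin d → ℝ) →ₗ[ℝ] ℝ, ∀ u v : Fin d → ℝ, Γ u v = a v • u + a u • v)) ∧
    (∀ a : (Fin d → ℝ) →ₗ[ℝ] ℝ, (∀ u v : Fin d → ℝ, Γ u v = a v • u + a u • v) →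
      (∀ a' : (Fin d → ℝ) →ₗ[ℝ] ℝ, (∀ u v : Fin d → ℝ, Γ u v = a' v • u + a' u • v) →
        a' = a) ∧
      (∀ i : Fin d,
        a (Pi.single i 1) = Γ (Pi.single i 1) (Pi.single i 1) i / 2) ∧
      (∀ i j k : Fin d,
        Γ (Pi.single i 1) (Pi.single j 1) k =
          (if i = k then a (Pi.single j 1) else 0) +
            (if j = k then a (Pi.single i 1) else 0))) :=
  stmt1_general d Γ hsym
end

section
/- Let U ⊆ ℝ^d be open (d ≥ 2), let a_1,…,a_d : U → ℝ be smooth, and write a{x}(u) = Σ_i a_i(x) u_i. Let F be an affine subspace of ℝ^d with direction subspace F⃗, let γ : I → U ∩ F be a C¹ curve contained in F, and let v : I → ℝ^d be a differentiable solution of the parallel-transport equation v'(t) = −( a{γ(t)}(γ'(t))·v(t) + a{γ(t)}(v(t))·γ'(t) ). If v(t₀) ∈ F⃗ for some t₀ ∈ I, then v(t) ∈ F⃗ for all t ∈ I. -/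
/-!
A curve in `F` has velocity in `F.direction`, so projecting the transport equation along
`F.direction` kills the term `a{γ}(v) γ'`. The transverse component `w` of `v` then solves the
scalar linear equation `w' = -a{γ}(γ') w` with `w t₀ = 0`, and Grönwall's inequality forces
`w = 0` on all of `I`.
-/

open Set Filter Topology

section LinearScalarODE

variable {E : Type*} [NormedAddCommGroup E] [NormedSpace ℝ E] {w : ℝ → E} {c : ℝ → ℝ}

theorem eqOn_zero_of_hasDerivWithinAt_eq_smul_of_left {a b : ℝ}
    (hc : ContinuousOn c (Icc a b))
    (hw : ∀ t ∈ Icc a b, HasDerivWithinAt w (c t • w t) (Icc a b) t) (ha : w a = 0) :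
    EqOn w 0 (Icc a b) := by
  obtain ⟨C, hC⟩ := isCompact_Icc.exists_bound_of_continuousOn hc
  refine eq_zero_of_abs_deriv_le_mul_abs_self_of_eq_zero_right (K := C)
    (fun t ht ↦ (hw t ht).continuousWithinAt)
    (fun t ht ↦ (hw t (Ico_subset_Icc_self ht)).mono_of_mem_nhdsWithin
      (Icc_mem_nhdsGE_of_mem ht)) ha fun t ht ↦ ?_
  rw [norm_smul]
  exact mul_le_mul_of_nonneg_right (hC t (Ico_subset_Icc_self ht)) (norm_nonneg _)

theorem eqOn_zero_of_hasDerivWithinAt_eq_smul_of_right {a b : ℝ}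
    (hc : ContinuousOn c (Icc a b))
    (hw : ∀ t ∈ Icc a b, HasDerivWithinAt w (c t • w t) (Icc a b) t) (hb : w b = 0) :
    EqOn w 0 (Icc a b) := by
  have hneg : MapsTo Neg.neg (Icc (-b) (-a)) (Icc a b) := fun t ht ↦
    ⟨le_neg.1 ht.2, neg_le.1 ht.1⟩
  have hrev : EqOn (w ∘ Neg.neg) 0 (Icc (-b) (-a)) := by
    refine eqOn_zero_of_hasDerivWithinAt_eq_smul_of_left (c := fun t ↦ -c (-t))
      (hc.comp continuousOn_neg hneg).neg (fun t ht ↦ ?_) (by simpa using hb)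
    convert (hw (-t) (hneg ht)).scomp t (hasDerivAt_neg t).hasDerivWithinAt hneg using 1
    simp
  intro t ht
  simpa using hrev ⟨neg_le_neg ht.2, neg_le_neg ht.1⟩

theorem Convex.eqOn_zero_of_hasDerivWithinAt_eq_smul {I : Set ℝ} (hI : Convex ℝ I)
    (hc : ContinuousOn c I) (hw : ∀ t ∈ I, HasDerivWithinAt w (c t • w t) I t)
    {t₀ : ℝ} (ht₀ : t₀ ∈ I) (hw₀ : w t₀ = 0) : EqOn w 0 I := by
  intro t ht
  rcases le_total t₀ t with h | h
  · have hsub : Icc t₀ t ⊆ I := hI.ordConnected.out ht₀ ht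
    exact eqOn_zero_of_hasDerivWithinAt_eq_smul_of_left (hc.mono hsub)
      (fun s hs ↦ (hw s (hsub hs)).mono hsub) hw₀ ⟨h, le_rfl⟩
  · have hsub : Icc t t₀ ⊆ I := hI.ordConnected.out ht ht₀
    exact eqOn_zero_of_hasDerivWithinAt_eq_smul_of_right (hc.mono hsub)
      (fun s hs ↦ (hw s (hsub hs)).mono hsub) hw₀ ⟨le_rfl, h⟩

end LinearScalarODE

theorem AffineSubspace.mem_direction_of_hasDerivWithinAt {𝕜 E : Type*}
    [NontriviallyNormedField 𝕜] [NormedAddCommGroup E] [NormedSpace 𝕜 E]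
    {F : AffineSubspace 𝕜 E} (hF : IsClosed (F.direction : Set E)) {γ : 𝕜 → E} {γ' : E}
    {I : Set 𝕜} {t : 𝕜} (hγI : MapsTo γ I F) (ht : t ∈ I) (hI : UniqueDiffWithinAt 𝕜 I t)
    (hγ : HasDerivWithinAt γ γ' I t) : γ' ∈ F.direction := by
  have : (𝓝[I \ {t}] t).NeBot :=
    accPt_principal_iff_nhdsWithin.1 (uniqueDiffWithinAt_iff_accPt.1 hI)
  refine hF.mem_of_tendsto (hasDerivWithinAt_iff_tendsto_slope.1 hγ) ?_
  filter_upwards [self_mem_nhdsWithin] with s hs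
  exact F.direction.smul_mem _ (F.vsub_mem_direction (hγI hs.1) (hγI ht))

theorem Submodule.ClosedComplemented.mem_of_hasDerivWithinAt_eq_smul_add {E : Type*}
    [NormedAddCommGroup E] [NormedSpace ℝ E] {S : Submodule ℝ E} (hS : S.ClosedComplemented)
    {I : Set ℝ} (hI : Convex ℝ I) {c : ℝ → ℝ} (hc : ContinuousOn c I) {u v : ℝ → E}
    (hu : ∀ t ∈ I, u t ∈ S) (hv : ∀ t ∈ I, HasDerivWithinAt v (c t • v t + u t) I t)
    {t₀ : ℝ} (ht₀ : t₀ ∈ I) (hv₀ : v t₀ ∈ S) : ∀ t ∈ I, v t ∈ S := by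
  set P := hS.complement.projectionL S hS.isTopCompl_complement.symm
  have hP (x : E) : P x = 0 ↔ x ∈ S := Submodule.projectionL_apply_eq_zero_iff _
  have hw : ∀ t ∈ I, HasDerivWithinAt (P ∘ v) (c t • (P ∘ v) t) I t := fun t ht ↦ by
    simpa [(hP _).2 (hu t ht)] using P.hasFDerivAt.comp_hasDerivWithinAt t (hv t ht)
  exact fun t ht ↦ (hP _).1 (hI.eqOn_zero_of_hasDerivWithinAt_eq_smul hc hw ht₀ ((hP _).2 hv₀) ht)

theorem Convex.uniqueDiffOn_of_mem_of_ne {I : Set ℝ} (hI : Convex ℝ I) {x y : ℝ} (hx : x ∈ I)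
    (hy : y ∈ I) (hxy : x ≠ y) : UniqueDiffOn ℝ I := by
  refine uniqueDiffOn_convex hI ((nonempty_Ioo.2 (min_lt_max.2 hxy)).mono ?_)
  rw [← interior_Icc]
  exact interior_mono (hI.ordConnected.uIcc_subset hx hy)

theorem stmt2_general (d : ℕ) (U : Set (Fin d → ℝ))
    (a : Fin d → (Fin d → ℝ) → ℝ) (ha : ∀ i, ContDiffOn ℝ (⊤ : ℕ∞) (a i) U)
    (F : AffineSubspace ℝ (Fin d → ℝ))
    (I : Set ℝ) (hI : Convex ℝ I)
    (γ γ' v : ℝ → Fin d → ℝ)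
    (hγmem : ∀ t ∈ I, γ t ∈ U ∧ γ t ∈ F)
    (hγ : ∀ t ∈ I, HasDerivWithinAt γ (γ' t) I t)
    (hγ'cont : ContinuousOn γ' I)
    (hv : ∀ t ∈ I, HasDerivWithinAt v
      (-((∑ i, a i (γ t) * γ' t i) • v t + (∑ i, a i (γ t) * v t i) • γ' t)) I t)
    (t₀ : ℝ) (ht₀ : t₀ ∈ I) (hv₀ : v t₀ ∈ F.direction) :
    ∀ t ∈ I, v t ∈ F.direction := by
  intro t ht
  rcases eq_or_ne t t₀ with rfl | htt₀
  · exact hv₀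
  have hγ' : ∀ s ∈ I, γ' s ∈ F.direction := fun s hs ↦
    F.mem_direction_of_hasDerivWithinAt (Submodule.closed_of_finiteDimensional _)
      (fun r hr ↦ (hγmem r hr).2) hs (hI.uniqueDiffOn_of_mem_of_ne ht ht₀ htt₀ s hs) (hγ s hs)
  have hc : ContinuousOn (fun s ↦ -∑ i, a i (γ s) * γ' s i) I := by
    have hγc : ContinuousOn γ I := fun s hs ↦ (hγ s hs).continuousWithinAt
    refine (continuousOn_finsetSum _ fun i _ ↦ ?_).neg
    exact ((ha i).continuousOn.comp hγc fun s hs ↦ (hγmem s hs).1).mul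
      ((continuous_apply i).comp_continuousOn hγ'cont)
  have hu : ∀ s ∈ I, -((∑ i, a i (γ s) * v s i) • γ' s) ∈ F.direction := fun s hs ↦
    F.direction.neg_mem (F.direction.smul_mem _ (hγ' s hs))
  refine (Submodule.ClosedComplemented.of_finiteDimensional _).mem_of_hasDerivWithinAt_eq_smul_add
    hI hc hu (fun s hs ↦ (hv s hs).congr_deriv ?_) ht₀ hv₀ t ht
  rw [neg_add, neg_smul]

/-- Parallel transport, for a projectively flattened connection with associated form
`a{x}(u) = Σ_i a_i(x) u_i`, of a vector tangent to an affine subspace `F` along a C¹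
curve contained in `F`, stays tangent to `F`. -/
theorem stmt2 (d : ℕ) (hd : 2 ≤ d) (U : Set (Fin d → ℝ)) (hU : IsOpen U)
    (a : Fin d → (Fin d → ℝ) → ℝ) (ha : ∀ i, ContDiffOn ℝ (⊤ : ℕ∞) (a i) U)
    (F : AffineSubspace ℝ (Fin d → ℝ))
    (I : Set ℝ) (hI : Convex ℝ I)
    (γ γ' v : ℝ → Fin d → ℝ)
    (hγmem : ∀ t ∈ I, γ t ∈ U ∧ γ t ∈ F)
    (hγ : ∀ t ∈ I, HasDerivWithinAt γ (γ' t) I t)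
    (hγ'cont : ContinuousOn γ' I)
    (hv : ∀ t ∈ I, HasDerivWithinAt v
      (-((∑ i, a i (γ t) * γ' t i) • v t + (∑ i, a i (γ t) * v t i) • γ' t)) I t)
    (t₀ : ℝ) (ht₀ : t₀ ∈ I) (hv₀ : v t₀ ∈ F.direction) :
    ∀ t ∈ I, v t ∈ F.direction :=
  stmt2_general d U a ha F I hI γ γ' v hγmem hγ hγ'cont hv t₀ ht₀ hv₀
end

section
/- Let U ⊆ ℝ^d be open (d ≥ 1), let ψ : U → ℝ be smooth and nowhere vanishing, and set a_i = −(∂_i ψ)/ψ and a{x}(u) = Σ_i a_i(x) u_i. Let γ : I → U be a C¹ curve and let v_1,…,v_d : I → ℝ^d be differentiable solutions of the parallel-transport equation v_m'(t) = −( a{γ(t)}(γ'(t))·v_m(t) + a{γ(t)}(v_m(t))·γ'(t) ) for m = 1,…,d. Then the function t ↦ det(v_1(t),…,v_d(t)) / ψ(γ(t))^{d+1} is constant on I. In other words, the volume form dx_1∧⋯∧dx_d / ψ^{d+1} is preserved by parallel transport. -/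
/-!
Write `Γ(w, u) = a(w) u + a(u) w`. By multilinearity of the determinant in the rows,
`(det V)' = ∑ₘ det (V with row m replaced by -Γ(γ', vₘ))`, i.e. `det V` times the trace of
`u ↦ -Γ(γ', u)`; Cramer's rule gives `∑ₘ a(vₘ) det (V with row m replaced by w) = a(w) det V`,
so the trace is `-(d + 1) a(γ')`. On the other hand `(ψ ∘ γ)' = dψ(γ') = -a(γ') ψ(γ)` for a
potential `ψ`. Hence `det V / ψ(γ)^(d+1)` has zero derivative on the convex set `I`.
-/

/-- The partial derivative `∂_j f` in the direction of the `j`-th coordinate. -/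
noncomputable def pder {d : ℕ} (f : (Fin d → ℝ) → ℝ) (j : Fin d) (x : Fin d → ℝ) : ℝ :=
  fderiv ℝ f x (Pi.single j 1)

open Finset Matrix

namespace Matrix

variable {n : Type*} [Fintype n] [DecidableEq n]

section Algebra

variable {R : Type*} [CommRing R]

/-- `Γ(w, u)ᵏ = Γᵏᵢⱼ wⁱ uʲ` for the Christoffel symbols `Γᵏᵢⱼ = δᵢₖ aⱼ + δⱼₖ aᵢ`. -/
def projFlatChristoffel (a w u : n → R) : n → R :=
  (a ⬝ᵥ w) • u + (a ⬝ᵥ u) • w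

theorem sum_dotProduct_mul_det_updateRow (M : Matrix n n R) (a w : n → R) :
    ∑ m, (M m ⬝ᵥ a) * (M.updateRow m w).det = (a ⬝ᵥ w) * M.det := by
  simp_rw [← cramer_transpose_apply]
  calc ∑ m, (M m ⬝ᵥ a) * cramer Mᵀ w m
      = (M *ᵥ a) ⬝ᵥ cramer Mᵀ w := rfl
    _ = a ⬝ᵥ (Mᵀ *ᵥ cramer Mᵀ w) := by rw [dotProduct_mulVec, vecMul_transpose]
    _ = (a ⬝ᵥ w) * M.det := by
      rw [mulVec_cramer, det_transpose, dotProduct_smul, smul_eq_mul, mul_comm]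

theorem sum_det_updateRow_neg_projFlatChristoffel (M : Matrix n n R) (a w : n → R) :
    ∑ m, (M.updateRow m (-projFlatChristoffel a w (M m))).det
      = -((Fintype.card n + 1) * (a ⬝ᵥ w) * M.det) := by
  have hrow : ∀ m, (M.updateRow m (-projFlatChristoffel a w (M m))).det
      = -((a ⬝ᵥ w) * M.det + (M m ⬝ᵥ a) * (M.updateRow m w).det) := by
    intro m
    rw [← neg_one_smul R, projFlatChristoffel, det_updateRow_smul, det_updateRow_add,
      det_updateRow_smul, det_updateRow_smul, updateRow_eq_self, dotProduct_comm a (M m)]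
    ring
  simp only [hrow, sum_neg_distrib, sum_add_distrib, sum_dotProduct_mul_det_updateRow, sum_const,
    card_univ, nsmul_eq_mul]
  ring

end Algebra

section Calculus

variable {𝕜 : Type*} [NontriviallyNormedField 𝕜]

noncomputable def detRowContinuousMultilinear :
    ContinuousMultilinearMap 𝕜 (fun _ : n => n → 𝕜) 𝕜 :=
  { (detRowAlternating : (n → 𝕜) [⋀^n]→ₗ[𝕜] 𝕜).toMultilinearMap with
    cont := continuous_id.matrix_det }

theorem hasDerivWithinAt_det_of_rows {c : n → 𝕜 → n → 𝕜} {c' : n → n → 𝕜} {s : Set 𝕜} {t : 𝕜}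
    (h : ∀ m, HasDerivWithinAt (c m) (c' m) s t) :
    HasDerivWithinAt (fun x => (of fun m i => c m x i).det)
      (∑ m, ((of fun m i => c m t i).updateRow m (c' m)).det) s t := by
  have hrows : HasDerivWithinAt (fun x m => c m x) c' s t := hasDerivWithinAt_pi.2 h
  have := (detRowContinuousMultilinear.hasFDerivAt fun m => c m t).comp_hasDerivWithinAt t hrows
  rwa [ContinuousMultilinearMap.linearDeriv_apply] at this

theorem hasDerivWithinAt_det_of_parallel {v : n → 𝕜 → n → 𝕜} {a w : n → 𝕜} {s : Set 𝕜} {t : 𝕜}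
    (hv : ∀ m, HasDerivWithinAt (v m) (-projFlatChristoffel a w (v m t)) s t) :
    HasDerivWithinAt (fun x => (of fun m i => v m x i).det)
      (-((Fintype.card n + 1) * (a ⬝ᵥ w) * (of fun m i => v m t i).det)) s t := by
  convert hasDerivWithinAt_det_of_rows hv using 1
  exact (sum_det_updateRow_neg_projFlatChristoffel _ a w).symm

end Calculus

end Matrix

theorem HasDerivWithinAt.div_pow_eq_zero {𝕜 : Type*} [NontriviallyNormedField 𝕜] {f g : 𝕜 → 𝕜}
    {c : 𝕜} {s : Set 𝕜} {t : 𝕜} (k : ℕ) (hf : HasDerivWithinAt f (k * c * f t) s t)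
    (hg : HasDerivWithinAt g (c * g t) s t) (hg0 : g t ≠ 0) :
    HasDerivWithinAt (fun x => f x / g x ^ k) 0 s t := by
  refine (hf.div (hg.pow k) (pow_ne_zero k hg0)).congr_deriv ?_
  rcases k with _ | k
  · simp
  · simp only [Pi.pow_apply, Nat.add_sub_cancel]
    ring

theorem Convex.eq_of_hasDerivWithinAt_zero {𝕜 G : Type*} [RCLike 𝕜] [NormedAddCommGroup G]
    [NormedSpace 𝕜 G] {f : 𝕜 → G} {s : Set 𝕜} (hs : Convex ℝ s)
    (hf : ∀ x ∈ s, HasDerivWithinAt f 0 s x) {x y : 𝕜} (hx : x ∈ s) (hy : y ∈ s) : f x = f y := by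
  have := norm_image_sub_le_of_norm_hasDerivWithin_le hf (fun _ _ => norm_zero.le) hs hy hx
  rwa [zero_mul, norm_le_zero_iff, sub_eq_zero] at this

section Potential

variable {d : ℕ}

noncomputable def potentialCoeff (ψ : (Fin d → ℝ) → ℝ) (x : Fin d → ℝ) : Fin d → ℝ :=
  fun i => -pder ψ i x / ψ x

theorem fderiv_apply_eq_sum_pder (f : (Fin d → ℝ) → ℝ) (x u : Fin d → ℝ) :
    fderiv ℝ f x u = ∑ i, u i * pder f i x := by
  conv_lhs => rw [pi_eq_sum_univ' u]
  simp only [map_sum, map_smul, smul_eq_mul, pder]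

theorem fderiv_apply_eq_neg_dotProduct_potentialCoeff_mul {ψ : (Fin d → ℝ) → ℝ}
    {x : Fin d → ℝ} (hψ : ψ x ≠ 0) (u : Fin d → ℝ) :
    fderiv ℝ ψ x u = -(potentialCoeff ψ x ⬝ᵥ u) * ψ x := by
  rw [fderiv_apply_eq_sum_pder, dotProduct, neg_mul, sum_mul, ← sum_neg_distrib]
  refine sum_congr rfl fun i _ => ?_
  simp only [potentialCoeff]
  field_simp

end Potential

theorem stmt5_general (d : ℕ) (U : Set (Fin d → ℝ)) (hU : IsOpen U)
    (ψ : (Fin d → ℝ) → ℝ) (hψ : ContDiffOn ℝ (⊤ : ℕ∞) ψ U) (hψ0 : ∀ x ∈ U, ψ x ≠ 0)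
    (I : Set ℝ) (hI : Convex ℝ I)
    (γ γ' : ℝ → Fin d → ℝ) (hγmem : ∀ t ∈ I, γ t ∈ U)
    (hγ : ∀ t ∈ I, HasDerivWithinAt γ (γ' t) I t)
    (v : Fin d → ℝ → Fin d → ℝ)
    (hv : ∀ m : Fin d, ∀ t ∈ I, HasDerivWithinAt (v m)
      (-((∑ i, (-(pder ψ i (γ t)) / ψ (γ t)) * γ' t i) • v m t
          + (∑ i, (-(pder ψ i (γ t)) / ψ (γ t)) * v m t i) • γ' t)) I t) :
    ∀ s ∈ I, ∀ t ∈ I,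
      (Matrix.of fun m i => v m s i).det / ψ (γ s) ^ (d + 1)
        = (Matrix.of fun m i => v m t i).det / ψ (γ t) ^ (d + 1) := by
  intro s hs t ht
  refine hI.eq_of_hasDerivWithinAt_zero
    (f := fun x => (Matrix.of fun m i => v m x i).det / ψ (γ x) ^ (d + 1)) (fun t ht => ?_) hs ht
  have hψγ0 : ψ (γ t) ≠ 0 := hψ0 _ (hγmem t ht)
  have hψγ : HasDerivWithinAt (fun x => ψ (γ x))
      (-(potentialCoeff ψ (γ t) ⬝ᵥ γ' t) * ψ (γ t)) I t := by
    have hdiff : DifferentiableAt ℝ ψ (γ t) :=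
      (hψ.differentiableOn (by simp)).differentiableAt (hU.mem_nhds (hγmem t ht))
    rw [← fderiv_apply_eq_neg_dotProduct_potentialCoeff_mul hψγ0]
    exact hdiff.hasFDerivAt.comp_hasDerivWithinAt t (hγ t ht)
  have hdet := hasDerivWithinAt_det_of_parallel (a := potentialCoeff ψ (γ t)) (hv · t ht)
  refine HasDerivWithinAt.div_pow_eq_zero (d + 1) (hdet.congr_deriv ?_) hψγ hψγ0
  rw [Fintype.card_fin]
  push_cast
  ring

/-- For the incompressible projectively flattened connection of potential `ψ`
(`a_i = −∂_iψ/ψ`), the volume form `dx_1∧⋯∧dx_d / ψ^{d+1}` is preserved by parallel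
transport: if `v_1, …, v_d` are parallel along `γ`, then
`det(v_1(t),…,v_d(t)) / ψ(γ(t))^{d+1}` is constant. -/
theorem stmt5 (d : ℕ) (hd : 1 ≤ d) (U : Set (Fin d → ℝ)) (hU : IsOpen U)
    (ψ : (Fin d → ℝ) → ℝ) (hψ : ContDiffOn ℝ (⊤ : ℕ∞) ψ U) (hψ0 : ∀ x ∈ U, ψ x ≠ 0)
    (I : Set ℝ) (hI : Convex ℝ I)
    (γ γ' : ℝ → Fin d → ℝ) (hγmem : ∀ t ∈ I, γ t ∈ U)
    (hγ : ∀ t ∈ I, HasDerivWithinAt γ (γ' t) I t) (hγ' : ContinuousOn γ' I)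
    (v : Fin d → ℝ → Fin d → ℝ)
    (hv : ∀ m : Fin d, ∀ t ∈ I, HasDerivWithinAt (v m)
      (-((∑ i, (-(pder ψ i (γ t)) / ψ (γ t)) * γ' t i) • v m t
          + (∑ i, (-(pder ψ i (γ t)) / ψ (γ t)) * v m t i) • γ' t)) I t) :
    ∀ s ∈ I, ∀ t ∈ I,
      (Matrix.of fun m i => v m s i).det / ψ (γ s) ^ (d + 1)
        = (Matrix.of fun m i => v m t i).det / ψ (γ t) ^ (d + 1) :=
  stmt5_general d U hU ψ hψ hψ0 I hI γ γ' hγmem hγ v hv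
end

section
/- Let U ⊆ ℝ^d be open (d ≥ 1) and let a_1,…,a_d : U → ℝ be smooth. Define R^l_{ijk} = δ_{il}(a_j a_k − ∂_j a_k) − δ_{jl}(a_i a_k − ∂_i a_k) + δ_{kl}(∂_i a_j − ∂_j a_i) and Ric_{jk} = Σ_i R^i_{ijk}. Then Ric_{jk} = 0 on U for all j,k if and only if R^l_{ijk} = 0 on U for all i,j,k,l; that is, for projectively flattened connections, Ricci-flatness is equivalent to flatness. -/
/-- The curvature coefficients `R^l_{ijk}` of the projectively flattened connection
with associated form coefficients `a_1, …, a_d`. -/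
noncomputable def curvR {d : ℕ} (a : Fin d → (Fin d → ℝ) → ℝ) (i j k l : Fin d)
    (x : Fin d → ℝ) : ℝ :=
  (if i = l then a j x * a k x - pder (a k) j x else 0)
    - (if j = l then a i x * a k x - pder (a k) i x else 0)
    + (if k = l then pder (a j) i x - pder (a i) j x else 0)

/-- The Ricci coefficients `Ric_{jk} = Σ_i R^i_{ijk}`. -/
noncomputable def ricci {d : ℕ} (a : Fin d → (Fin d → ℝ) → ℝ) (j k : Fin d)
    (x : Fin d → ℝ) : ℝ :=
  ∑ i, curvR a i j k i x

/-!
Both tensors are built from `P_{jk} = a_j a_k − ∂_j a_k`: `R^l_{ijk} = δ_{il} P_{jk} − δ_{jl} P_{ik}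
+ δ_{kl} (P_{ji} − P_{ij})` and `Ric_{jk} = d P_{jk} − P_{kj}`. Ricci-flatness gives
`d P_{jk} = P_{kj}` and `d P_{kj} = P_{jk}`, hence `(d² − 1) P_{jk} = 0`, so `P = 0` once `d ≠ 1`
and then `R = 0`; for `d = 1` all indices coincide and `R` vanishes identically.
-/

noncomputable def curvP {d : ℕ} (a : Fin d → (Fin d → ℝ) → ℝ) (j k : Fin d) (x : Fin d → ℝ) : ℝ :=
  a j x * a k x - pder (a k) j x

variable {d : ℕ} (a : Fin d → (Fin d → ℝ) → ℝ) (x : Fin d → ℝ)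

lemma curvR_eq_curvP (i j k l : Fin d) :
    curvR a i j k l x = (if i = l then curvP a j k x else 0) - (if j = l then curvP a i k x else 0)
      + (if k = l then curvP a j i x - curvP a i j x else 0) := by
  simp only [curvR, curvP]
  congr 2
  ring

lemma ricci_eq_curvP (j k : Fin d) : ricci a j k x = d * curvP a j k x - curvP a k j x := by
  simp only [ricci, curvR_eq_curvP, Finset.sum_add_distrib, Finset.sum_sub_distrib,
    Finset.sum_ite_eq, Finset.mem_univ, if_true, Finset.sum_const, Finset.card_fin, nsmul_eq_mul]
  simp only [curvP]
  ring

lemma curvR_eq_zero_of_subsingleton [Subsingleton (Fin d)] (i j k l : Fin d) :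
    curvR a i j k l x = 0 := by
  obtain rfl : j = i := Subsingleton.elim _ _
  obtain rfl : k = j := Subsingleton.elim _ _
  simp [curvR]

lemma eq_zero_of_mul_sub_eq_zero_of_mul_sub_eq_zero {c p q : ℝ} (hc : c ^ 2 ≠ 1)
    (hpq : c * p - q = 0) (hqp : c * q - p = 0) : p = 0 := by
  have h : (c ^ 2 - 1) * p = 0 := by linear_combination c * hpq + hqp
  exact (mul_eq_zero.mp h).resolve_left (sub_ne_zero.mpr hc)

lemma curvP_eq_zero_of_ricci_eq_zero (hd : d ≠ 1) (h : ∀ j k, ricci a j k x = 0) (j k : Fin d) :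
    curvP a j k x = 0 := by
  have hd2 : (d : ℝ) ^ 2 ≠ 1 := by
    rw [Ne, pow_eq_one_iff_of_nonneg (Nat.cast_nonneg (α := ℝ) d) two_ne_zero]
    exact_mod_cast hd
  exact eq_zero_of_mul_sub_eq_zero_of_mul_sub_eq_zero hd2
    ((ricci_eq_curvP a x j k).symm.trans (h j k)) ((ricci_eq_curvP a x k j).symm.trans (h k j))

lemma ricci_eq_zero_iff_curvR_eq_zero :
    (∀ j k : Fin d, ricci a j k x = 0) ↔ ∀ i j k l : Fin d, curvR a i j k l x = 0 := by
  refine ⟨fun h i j k l => ?_, fun h j k => Finset.sum_eq_zero fun i _ => h i j k i⟩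
  rcases eq_or_ne d 1 with rfl | hd
  · exact curvR_eq_zero_of_subsingleton a x i j k l
  · simp [curvR_eq_curvP, curvP_eq_zero_of_ricci_eq_zero a x hd h]

theorem stmt6_general (d : ℕ) (U : Set (Fin d → ℝ))
    (a : Fin d → (Fin d → ℝ) → ℝ) :
    (∀ x ∈ U, ∀ j k : Fin d, ricci a j k x = 0) ↔
      (∀ x ∈ U, ∀ i j k l : Fin d, curvR a i j k l x = 0) :=
  forall₂_congr fun x _ => ricci_eq_zero_iff_curvR_eq_zero a x

/-- For a projectively flattened connection, Ricci-flatness is equivalent to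
flatness (vanishing of the whole curvature tensor). -/
theorem stmt6 (d : ℕ) (hd : 1 ≤ d) (U : Set (Fin d → ℝ)) (hU : IsOpen U)
    (a : Fin d → (Fin d → ℝ) → ℝ) (ha : ∀ i, ContDiffOn ℝ (⊤ : ℕ∞) (a i) U) :
    (∀ x ∈ U, ∀ j k : Fin d, ricci a j k x = 0) ↔
      (∀ x ∈ U, ∀ i j k l : Fin d, curvR a i j k l x = 0) :=
  stmt6_general d U a
end

section
/- Let d ≥ 2, 0 ≤ p ≤ d, with ε_i = 1 for i ≤ p and ε_i = −1 for i > p, q(x) = Σ_i ε_i x_i², λ ∈ ℝ, and let U ⊆ ℝ^d be a connected open set on which ψ(x) := q(x) + λ does not vanish. Suppose ρ : U → (0,∞) is a function such that for every C² curve γ : I → U satisfying the geodesic equation γ''(t) = 2((ψ∘γ)'(t)/ψ(γ(t))) γ'(t), the map t ↦ ρ(γ(t)) · q(γ'(t)) is constant. Then ρ · ψ⁴ is constant on U; equivalently, up to a multiplicative constant, h = g/ψ⁴ is the unique metric conformal to the flat pseudo-Euclidean metric g that is isochrone to the stiff connection of potential ψ. -/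
/-!
Geodesics of the stiff connection of potential `ψ = q + λ` include reparametrised straight
lines: if `q(v) ≠ 0` and `w' = ψ(x + w v)²`, then `γ = x + w v` solves the geodesic equation
with `γ' = ψ(γ)² v`, so isochrony makes `ρ(γ) ψ(γ)⁴ q(v)` constant along `γ`. Hence `ρ ψ⁴`
takes equal values at the ends of every non-null segment in `U`. Every point near `z` is joined
to `z` by two non-null segments, so `ρ ψ⁴` is locally constant, hence constant on the
connected set `U`.
-/

/-- The sign `ε_i` of the standard quadratic form of signature `(p, d−p)`. -/
def eps (d p : ℕ) (i : Fin d) : ℝ := if (i : ℕ) < p then 1 else -1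

/-- The standard bilinear form of signature `(p, d−p)` on `ℝ^d`. -/
def bform (d p : ℕ) (x y : Fin d → ℝ) : ℝ := ∑ i, eps d p i * x i * y i

/-- The standard quadratic form of signature `(p, d−p)` on `ℝ^d`. -/
def qf (d p : ℕ) (x : Fin d → ℝ) : ℝ := ∑ i, eps d p i * x i ^ 2

open Set Filter Topology

theorem surjective_of_hasDerivAt_of_le {F F' : ℝ → ℝ} {m : ℝ}
    (hF : ∀ t, HasDerivAt F (F' t) t) (hm : 0 < m) (hle : ∀ t, m ≤ F' t) :
    Function.Surjective F := by
  have hmono : Monotone fun t => F t - m * t :=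
    monotone_of_hasDerivAt_nonneg (fun t => (hF t).sub ((hasDerivAt_id t).const_mul m))
      fun t => by simpa using hle t
  have hlin : Tendsto (fun t => F 0 + m * t) atTop atTop :=
    tendsto_atTop_add_const_left _ _ (tendsto_id.const_mul_atTop hm)
  have hlin' : Tendsto (fun t => F 0 + m * t) atBot atBot :=
    tendsto_atBot_add_const_left _ _ (tendsto_id.const_mul_atBot hm)
  refine (continuous_iff_continuousAt.2 fun t => (hF t).continuousAt).surjective ?_ ?_
  · refine tendsto_atTop_mono' _ ?_ hlin
    filter_upwards [eventually_ge_atTop 0] with t ht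
    linarith [hmono ht]
  · refine tendsto_atBot_mono' _ ?_ hlin'
    filter_upwards [eventually_le_atBot 0] with t ht
    linarith [hmono ht]

theorem exists_hasDerivAt_eq_comp {h : ℝ → ℝ} {a b : ℝ} (hab : a ≤ b)
    (hc : ContinuousOn h (Icc a b)) (hpos : ∀ u ∈ Icc a b, 0 < h u) :
    ∃ T ≥ 0, ∃ w : ℝ → ℝ, w 0 = a ∧ w T = b ∧ MapsTo w (Icc 0 T) (Icc a b) ∧
      ∀ t ∈ Icc 0 T, HasDerivAt w (h (w t)) t := by
  set π := projIcc a b hab with hπ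
  have hπpos (u : ℝ) : 0 < h (π u) := hpos _ (π u).2
  -- `w` is the inverse of `F = ∫ k` with `k = 1 / h`; extending `k` constantly outside `[a, b]`
  -- bounds it below by a positive constant, so that `F` is a bijection of `ℝ`.
  set k : ℝ → ℝ := fun u => (h (π u))⁻¹
  have hk : Continuous k :=
    (hc.comp_continuous (continuous_subtype_val.comp continuous_projIcc) fun u => (π u).2).inv₀
      fun u => (hπpos u).ne'
  obtain ⟨m, hm, hmk⟩ : ∃ m > 0, ∀ u, m ≤ k u := by
    obtain ⟨u₀, hu₀, hmin⟩ :=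
      isCompact_Icc.exists_isMinOn (nonempty_Icc.2 hab) hk.continuousOn
    refine ⟨k u₀, inv_pos.2 (hπpos u₀), fun u => ?_⟩
    have hku : k u = k (π u) := by simp only [k, π, projIcc_val]
    exact hku ▸ hmin (π u).2
  set F : ℝ → ℝ := fun t => ∫ s in a..t, k s
  have hF (t : ℝ) : HasDerivAt F (k t) t := (hk.integral_hasStrictDerivAt a t).hasDerivAt
  have hFmono : StrictMono F := strictMono_of_hasDerivAt_pos hF fun t => hm.trans_le (hmk t)
  set e := hFmono.orderIsoOfSurjective F (surjective_of_hasDerivAt_of_le hF hm hmk)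
  have hFa : F a = 0 := intervalIntegral.integral_same
  have hwF (u : ℝ) : e.symm (F u) = u := e.symm_apply_apply u
  have hmaps : MapsTo e.symm (Icc 0 (F b)) (Icc a b) := fun t ht => by
    rw [← hFa] at ht
    rw [← hwF a, ← hwF b]
    exact ⟨e.symm.monotone ht.1, e.symm.monotone ht.2⟩
  refine ⟨F b, hFa ▸ hFmono.monotone hab, e.symm, hFa ▸ hwF a, hwF b, hmaps, fun t ht => ?_⟩
  have hderiv := HasDerivAt.of_local_left_inverse e.symm.continuous.continuousAt (hF (e.symm t))
    (inv_pos.2 (hπpos _)).ne' (Eventually.of_forall e.apply_symm_apply)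
  rwa [inv_inv, hπ, projIcc_of_mem hab (hmaps ht)] at hderiv

section QuadraticForm

variable {d p : ℕ}

theorem eps_ne_zero (i : Fin d) : eps d p i ≠ 0 := by
  unfold eps; split <;> norm_num

theorem qf_single (i : Fin d) : qf d p (Pi.single i 1) = eps d p i := by
  rw [qf, Finset.sum_eq_single i (fun j _ hj => by simp [hj]) (by simp)]
  simp

theorem qf_smul (c : ℝ) (v : Fin d → ℝ) : qf d p (c • v) = c ^ 2 * qf d p v := by
  simp only [qf, Pi.smul_apply, smul_eq_mul, Finset.mul_sum]
  exact Finset.sum_congr rfl fun i _ => by ring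

theorem bform_smul_right (c : ℝ) (x v : Fin d → ℝ) :
    bform d p x (c • v) = c * bform d p x v := by
  simp only [bform, Pi.smul_apply, smul_eq_mul, Finset.mul_sum]
  exact Finset.sum_congr rfl fun i _ => by ring

theorem qf_add_smul (x v : Fin d → ℝ) (u : ℝ) :
    qf d p (x + u • v) = qf d p x + 2 * bform d p x v * u + qf d p v * u ^ 2 := by
  simp only [qf, bform, Pi.add_apply, Pi.smul_apply, smul_eq_mul, Finset.mul_sum,
    Finset.sum_mul, ← Finset.sum_add_distrib]
  exact Finset.sum_congr rfl fun i _ => by ring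

theorem bform_add_smul_left (x v : Fin d → ℝ) (u : ℝ) :
    bform d p (x + u • v) v = bform d p x v + u * qf d p v := by
  simp only [qf, bform, Pi.add_apply, Pi.smul_apply, smul_eq_mul, Finset.mul_sum,
    ← Finset.sum_add_distrib]
  exact Finset.sum_congr rfl fun i _ => by ring

theorem hasDerivAt_qf_add_smul (x v : Fin d → ℝ) (u : ℝ) :
    HasDerivAt (fun u => qf d p (x + u • v)) (2 * bform d p (x + u • v) v) u := by
  simp only [qf_add_smul x v, bform_add_smul_left]
  refine ((((hasDerivAt_id' u).const_mul (2 * bform d p x v)).const_add (qf d p x)).fun_add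
    ((hasDerivAt_pow 2 u).const_mul (qf d p v))).congr_deriv ?_
  push_cast
  ring

end QuadraticForm

theorem exists_mem_Ioo_quadratic_ne_zero {a b c l r : ℝ} (ha : a ≠ 0) (hlr : l < r) :
    ∃ s ∈ Ioo l r, a * s ^ 2 + b * s + c ≠ 0 := by
  open Polynomial in
  by_contra! h
  have := eq_zero_of_infinite_isRoot (C a * X ^ 2 + C b * X + C c)
    ((Ioo_infinite hlr).mono fun s hs => by simpa using h s hs)
  apply ha
  simpa using congrArg (coeff · 2) this

def IsIsochrone (d p : ℕ) (lam : ℝ) (U : Set (Fin d → ℝ)) (ρ : (Fin d → ℝ) → ℝ) : Prop :=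
  ∀ (I : Set ℝ), Convex ℝ I → ∀ γ γ' γ'' : ℝ → Fin d → ℝ,
    (∀ t ∈ I, γ t ∈ U) →
    (∀ t ∈ I, HasDerivWithinAt γ (γ' t) I t) →
    (∀ t ∈ I, HasDerivWithinAt γ' (γ'' t) I t) →
    (∀ t ∈ I, γ'' t = (4 * bform d p (γ t) (γ' t) / (qf d p (γ t) + lam)) • γ' t) →
    ∀ s ∈ I, ∀ t ∈ I, ρ (γ s) * qf d p (γ' s) = ρ (γ t) * qf d p (γ' t)

namespace IsIsochrone

variable {d p : ℕ} {lam : ℝ} {U : Set (Fin d → ℝ)} {ρ : (Fin d → ℝ) → ℝ}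

theorem eq_of_segment_subset (hiso : IsIsochrone d p lam U ρ)
    (hψ : ∀ x ∈ U, qf d p x + lam ≠ 0) {x y : Fin d → ℝ} (hq : qf d p (y - x) ≠ 0)
    (hseg : segment ℝ x y ⊆ U) :
    ρ x * (qf d p x + lam) ^ 4 = ρ y * (qf d p y + lam) ^ 4 := by
  set v := y - x
  set φ : ℝ → ℝ := fun u => qf d p (x + u • v) + lam
  have hφ (u : ℝ) : HasDerivAt φ (2 * bform d p (x + u • v) v) u :=
    (hasDerivAt_qf_add_smul x v u).add_const lam
  have hmem : ∀ u ∈ Icc (0 : ℝ) 1, x + u • v ∈ U := fun u hu =>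
    hseg (by rw [segment_eq_image']; exact ⟨u, hu, rfl⟩)
  obtain ⟨T, hT, w, hw0, hwT, hwmaps, hw⟩ :=
    exists_hasDerivAt_eq_comp (h := fun u => φ u ^ 2) zero_le_one
    ((continuous_iff_continuousAt.2 fun u => (hφ u).continuousAt).pow 2).continuousOn
    fun u hu => pow_two_pos_of_ne_zero (hψ _ (hmem u hu))
  have hφw_ne {t : ℝ} (ht : t ∈ Icc 0 T) : φ (w t) ≠ 0 := hψ _ (hmem _ (hwmaps ht))
  set γ : ℝ → Fin d → ℝ := fun t => x + w t • v
  have hγ {t : ℝ} (ht : t ∈ Icc 0 T) : HasDerivAt γ (φ (w t) ^ 2 • v) t :=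
    ((hw t ht).smul_const v).const_add x
  have hγ' {t : ℝ} (ht : t ∈ Icc 0 T) : HasDerivAt (fun t => φ (w t) ^ 2 • v)
      ((4 * φ (w t) ^ 3 * bform d p (γ t) v) • v) t := by
    refine ((((hφ (w t)).comp t (hw t ht)).fun_pow 2).smul_const v).congr_deriv ?_
    simp only [Function.comp_apply, γ]
    congr 1
    norm_num
    ring
  have hgeod {t : ℝ} (ht : t ∈ Icc 0 T) : (4 * φ (w t) ^ 3 * bform d p (γ t) v) • v =
      (4 * bform d p (γ t) (φ (w t) ^ 2 • v) / (qf d p (γ t) + lam)) • φ (w t) ^ 2 • v := by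
    rw [bform_smul_right, smul_smul]
    congr 1
    change _ = 4 * (φ (w t) ^ 2 * _) / φ (w t) * _
    field_simp [hφw_ne ht]
  have key := hiso (Icc 0 T) (convex_Icc 0 T) γ _ _ (fun t ht => hmem _ (hwmaps ht))
    (fun t ht => (hγ ht).hasDerivWithinAt) (fun t ht => (hγ' ht).hasDerivWithinAt)
    (fun t ht => hgeod ht) 0 ⟨le_rfl, hT⟩ T ⟨hT, le_rfl⟩
  simp only [γ, φ, hw0, hwT, qf_smul, zero_smul, one_smul, add_zero, v, add_sub_cancel] at key
  exact mul_right_cancel₀ hq (by linear_combination key)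

theorem eventually_eq (hiso : IsIsochrone d p lam U ρ) (hψ : ∀ x ∈ U, qf d p x + lam ≠ 0)
    (hd : 0 < d) (hU : IsOpen U) {z : Fin d → ℝ} (hz : z ∈ U) :
    ∀ᶠ y in 𝓝 z, ρ y * (qf d p y + lam) ^ 4 = ρ z * (qf d p z + lam) ^ 4 := by
  obtain ⟨r, hr, hball⟩ := Metric.isOpen_iff.1 hU z hz
  filter_upwards [Metric.ball_mem_nhds z (half_pos hr)] with y hy
  set i : Fin d := ⟨0, hd⟩
  set e : Fin d → ℝ := Pi.single i 1
  -- Go from `z` to `y` through `z' = z + s e`, with `s` chosen so that both legs are non-null: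
  -- `s ↦ q(y - z - s e)` is quadratic with leading coefficient `q(e) = ε_i ≠ 0`.
  obtain ⟨s, ⟨hs0, hsr⟩, hs⟩ := exists_mem_Ioo_quadratic_ne_zero (eps_ne_zero (p := p) i)
    (half_pos hr) (b := -2 * bform d p (y - z) e) (c := qf d p (y - z))
  set z' := z + s • e
  have hz' : z' ∈ Metric.ball z r := by
    rw [Metric.mem_ball, dist_eq_norm, add_sub_cancel_left, norm_smul, Pi.norm_single, norm_one,
      mul_one, Real.norm_of_nonneg hs0.le]
    linarith
  have hq₁ : qf d p (z' - z) ≠ 0 := by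
    rw [add_sub_cancel_left, qf_smul, qf_single]
    exact mul_ne_zero (pow_ne_zero 2 hs0.ne') (eps_ne_zero i)
  have hq₂ : qf d p (y - z') ≠ 0 := by
    rw [show y - z' = (y - z) + (-s) • e by module, qf_add_smul, qf_single]
    convert hs using 1
    ring
  have hy' : y ∈ Metric.ball z r := Metric.ball_subset_ball (half_le_self hr.le) hy
  have hseg₁ := ((convex_ball z r).segment_subset (Metric.mem_ball_self hr) hz').trans hball
  have hseg₂ := ((convex_ball z r).segment_subset hz' hy').trans hball
  exact ((hiso.eq_of_segment_subset hψ hq₁ hseg₁).trans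
    (hiso.eq_of_segment_subset hψ hq₂ hseg₂)).symm

end IsIsochrone

theorem stmt8_general (d p : ℕ) (hd : 2 ≤ d) (lam : ℝ)
    (U : Set (Fin d → ℝ)) (hUopen : IsOpen U) (hUconn : IsConnected U)
    (hψ : ∀ x ∈ U, qf d p x + lam ≠ 0)
    (ρ : (Fin d → ℝ) → ℝ)
    (hiso : ∀ (I : Set ℝ), Convex ℝ I → ∀ γ γ' γ'' : ℝ → Fin d → ℝ,
      (∀ t ∈ I, γ t ∈ U) →
      (∀ t ∈ I, HasDerivWithinAt γ (γ' t) I t) →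
      (∀ t ∈ I, HasDerivWithinAt γ' (γ'' t) I t) →
      (∀ t ∈ I, γ'' t = (4 * bform d p (γ t) (γ' t) / (qf d p (γ t) + lam)) • γ' t) →
      ∀ s ∈ I, ∀ t ∈ I, ρ (γ s) * qf d p (γ' s) = ρ (γ t) * qf d p (γ' t)) :
    ∃ c : ℝ, ∀ x ∈ U, ρ x * (qf d p x + lam) ^ 4 = c := by
  have hiso' : IsIsochrone d p lam U ρ := hiso
  obtain ⟨x₀, hx₀⟩ := hUconn.nonempty
  exact ⟨_, fun x hx => eq_of_germ_isConstant_on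
    (fun z hz => ⟨_, hiso'.eventually_eq hψ (by omega) hUopen hz⟩) hUconn.isPreconnected hx hx₀⟩

/-- Uniqueness of the isochrone metric: if `ρ > 0` on a connected open set `U` on
which `ψ = q + λ` does not vanish, and every geodesic `γ` of the stiff connection of
potential `ψ` (i.e. every solution of `γ'' = (4⟨γ,γ'⟩/ψ(γ)) γ'`) has constant squared
speed `ρ(γ)·q(γ')`, then `ρ·ψ⁴` is constant on `U`. -/
theorem stmt8 (d p : ℕ) (hd : 2 ≤ d) (hp : p ≤ d) (lam : ℝ)
    (U : Set (Fin d → ℝ)) (hUopen : IsOpen U) (hUconn : IsConnected U)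
    (hψ : ∀ x ∈ U, qf d p x + lam ≠ 0)
    (ρ : (Fin d → ℝ) → ℝ) (hρ : ∀ x ∈ U, 0 < ρ x)
    (hiso : ∀ (I : Set ℝ), Convex ℝ I → ∀ γ γ' γ'' : ℝ → Fin d → ℝ,
      (∀ t ∈ I, γ t ∈ U) →
      (∀ t ∈ I, HasDerivWithinAt γ (γ' t) I t) →
      (∀ t ∈ I, HasDerivWithinAt γ' (γ'' t) I t) →
      (∀ t ∈ I, γ'' t = (4 * bform d p (γ t) (γ' t) / (qf d p (γ t) + lam)) • γ' t) →
      ∀ s ∈ I, ∀ t ∈ I, ρ (γ s) * qf d p (γ' s) = ρ (γ t) * qf d p (γ' t)) :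
    ∃ c : ℝ, ∀ x ∈ U, ρ x * (qf d p x + lam) ^ 4 = c :=
  stmt8_general d p hd lam U hUopen hUconn hψ ρ hiso
end

section
/- Let d ≥ 2, 0 ≤ p ≤ d, with ε_i = 1 for i ≤ p and ε_i = −1 for i > p. Let U ⊆ ℝ^d be open and ψ : U → ℝ smooth and nowhere vanishing, and set R^l_{ijk} = δ_{il}(∂_j∂_kψ)/ψ − δ_{jl}(∂_i∂_kψ)/ψ (the curvature coefficients of the incompressible projectively flattened connection of potential ψ). Then the conditions [for all i,j,k: R^k_{ijk} = 0, and for all i,j and all k ≠ l: ε_k R^l_{ijk} + ε_l R^k_{ijl} = 0] hold on U if and only if [∂_i∂_j ψ = 0 on U for all i ≠ j, and there exists a smooth function f : U → ℝ with ∂_i∂_i ψ = ε_i f on U for every i]. -/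
/-- The second partial derivative `∂_j ∂_k f`. -/
noncomputable def sder {d : ℕ} (f : (Fin d → ℝ) → ℝ) (j k : Fin d) (x : Fin d → ℝ) : ℝ :=
  fderiv ℝ (fun y => fderiv ℝ f y (Pi.single k 1)) x (Pi.single j 1)

/-- The curvature coefficients `R^l_{ijk} = δ_{il}(∂_j∂_kψ)/ψ − δ_{jl}(∂_i∂_kψ)/ψ` of
the incompressible projectively flattened connection of potential `ψ`. -/
noncomputable def curvRpot {d : ℕ} (ψ : (Fin d → ℝ) → ℝ) (i j k l : Fin d)
    (x : Fin d → ℝ) : ℝ :=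
  (if i = l then sder ψ j k x / ψ x else 0) - (if j = l then sder ψ i k x / ψ x else 0)

/-!
At a point where `ψ ≠ 0`, the trace condition `R^j_{jij} = ψ_{ij}/ψ = 0` (for `i ≠ j`) kills the
off-diagonal Hessian, and the isometry condition for `(i, j, k, l) = (l, k, k, l)` reads
`(ε_k ψ_{kk} - ε_l ψ_{ll})/ψ = 0`, so `ε_i ψ_{ii}` is one smooth function `f` and, as `ε_i² = 1`,
`ψ_{ii} = ε_i f`. Conversely, a Hessian `f · diag(ε)` gives the constant-curvature form
`R^l_{ijk} = (f/ψ)(δ_{il} ε_j δ_{jk} - δ_{jl} ε_i δ_{ik})`, which satisfies both conditions.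
-/

lemma eps_mul_self (d p : ℕ) (i : Fin d) : eps d p i * eps d p i = 1 := by
  unfold eps; split_ifs <;> norm_num

lemma contDiffOn_sder {d : ℕ} {U : Set (Fin d → ℝ)} (hU : IsOpen U)
    {ψ : (Fin d → ℝ) → ℝ} (hψ : ContDiffOn ℝ (⊤ : ℕ∞) ψ U) (j k : Fin d) :
    ContDiffOn ℝ (⊤ : ℕ∞) (sder ψ j k) U := by
  have hDψ : ContDiffOn ℝ (⊤ : ℕ∞) (fun y => fderiv ℝ ψ y (Pi.single k 1)) U :=
    (hψ.fderiv_of_isOpen hU (by exact_mod_cast le_top)).clm_apply contDiffOn_const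
  exact (hDψ.fderiv_of_isOpen hU (by exact_mod_cast le_top)).clm_apply contDiffOn_const

section Curvature

variable {d : ℕ} {ψ : (Fin d → ℝ) → ℝ} {x : Fin d → ℝ}

lemma curvRpot_self_self_of_ne {i j : Fin d} (hij : i ≠ j) :
    curvRpot ψ j i j j x = sder ψ i j x / ψ x := by
  simp [curvRpot, hij]

lemma eps_mul_curvRpot_add_eps_mul_curvRpot_swap (p : ℕ) {k l : Fin d} (hkl : k ≠ l) :
    eps d p k * curvRpot ψ l k k l x + eps d p l * curvRpot ψ l k l k x =
      (eps d p k * sder ψ k k x - eps d p l * sder ψ l l x) / ψ x := by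
  simp only [curvRpot, ↓reduceIte, hkl, Ne.symm hkl, sub_zero, zero_sub, mul_neg]
  ring

lemma curvRpot_eq_of_sder_eq (p : ℕ) {c : ℝ}
    (hH : ∀ a b, sder ψ a b x = if a = b then eps d p a * c else 0) (i j k l : Fin d) :
    curvRpot ψ i j k l x =
      c / ψ x * ((if i = l ∧ j = k then eps d p j else 0) -
        (if j = l ∧ i = k then eps d p i else 0)) := by
  simp only [curvRpot, hH]
  split_ifs <;> simp_all <;> ring

lemma curvature_conditions_of_sder_eq (p : ℕ) {c : ℝ}
    (hH : ∀ a b, sder ψ a b x = if a = b then eps d p a * c else 0) :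
    (∀ i j k : Fin d, curvRpot ψ i j k k x = 0) ∧
      ∀ i j k l : Fin d, k ≠ l →
        eps d p k * curvRpot ψ i j k l x + eps d p l * curvRpot ψ i j l k x = 0 := by
  simp only [curvRpot_eq_of_sder_eq p hH]
  refine ⟨fun i j k => ?_, fun i j k l hkl => ?_⟩
  · by_cases hik : i = k <;> by_cases hjk : j = k <;> simp [hik, hjk]
  · split_ifs <;> simp_all <;> ring_nf <;> simp [sq, eps_mul_self]

end Curvature

theorem stmt10_general (d p : ℕ) (hd : 2 ≤ d)
    (U : Set (Fin d → ℝ)) (hU : IsOpen U)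
    (ψ : (Fin d → ℝ) → ℝ) (hψ : ContDiffOn ℝ (⊤ : ℕ∞) ψ U)
    (hψ0 : ∀ x ∈ U, ψ x ≠ 0) :
    ((∀ x ∈ U, ∀ i j k : Fin d, curvRpot ψ i j k k x = 0) ∧
      (∀ x ∈ U, ∀ i j k l : Fin d, k ≠ l →
        eps d p k * curvRpot ψ i j k l x + eps d p l * curvRpot ψ i j l k x = 0)) ↔
    ((∀ x ∈ U, ∀ i j : Fin d, i ≠ j → sder ψ i j x = 0) ∧
      ∃ f : (Fin d → ℝ) → ℝ, ContDiffOn ℝ (⊤ : ℕ∞) f U ∧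
        ∀ i : Fin d, ∀ x ∈ U, sder ψ i i x = eps d p i * f x) := by
  constructor
  · rintro ⟨htrace, hisom⟩
    let i₀ : Fin d := ⟨0, by omega⟩
    refine ⟨fun x hx i j hij => ?_, fun x => eps d p i₀ * sder ψ i₀ i₀ x,
      contDiffOn_const.mul (contDiffOn_sder hU hψ i₀ i₀), fun i x hx => ?_⟩
    · simpa [curvRpot_self_self_of_ne hij, hψ0 x hx] using htrace x hx j i j
    · dsimp only
      by_cases hi : i = i₀
      · rw [hi, ← mul_assoc, eps_mul_self, one_mul]
      have h := hisom x hx i₀ i i i₀ hi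
      rw [eps_mul_curvRpot_add_eps_mul_curvRpot_swap p hi, div_eq_zero_iff, sub_eq_zero] at h
      rw [← h.resolve_right (hψ0 x hx), ← mul_assoc, eps_mul_self, one_mul]
  · rintro ⟨hoff, f, -, hdiag⟩
    have hH : ∀ x ∈ U, ∀ a b, sder ψ a b x = if a = b then eps d p a * f x else 0 := by
      intro x hx a b
      split_ifs with hab
      · rw [hab, hdiag b x hx]
      · exact hoff x hx a b hab
    exact ⟨fun x hx => (curvature_conditions_of_sder_eq p (hH x hx)).1,
      fun x hx => (curvature_conditions_of_sder_eq p (hH x hx)).2⟩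

/-- The first-order infinitesimal holonomies of the incompressible projectively
flattened connection of potential `ψ` are infinitesimal isometries of the standard
pseudo-Euclidean structure of signature `(p, d−p)` (i.e. `R^k_{ijk} = 0` and
`ε_k R^l_{ijk} + ε_l R^k_{ijl} = 0` for `k ≠ l`) iff `∂_i∂_j ψ = 0` for `i ≠ j` and
there is a smooth `f` with `∂_i∂_i ψ = ε_i f` for every `i`. -/
theorem stmt10 (d p : ℕ) (hd : 2 ≤ d) (hp : p ≤ d)
    (U : Set (Fin d → ℝ)) (hU : IsOpen U)
    (ψ : (Fin d → ℝ) → ℝ) (hψ : ContDiffOn ℝ (⊤ : ℕ∞) ψ U)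
    (hψ0 : ∀ x ∈ U, ψ x ≠ 0) :
    ((∀ x ∈ U, ∀ i j k : Fin d, curvRpot ψ i j k k x = 0) ∧
      (∀ x ∈ U, ∀ i j k l : Fin d, k ≠ l →
        eps d p k * curvRpot ψ i j k l x + eps d p l * curvRpot ψ i j l k x = 0)) ↔
    ((∀ x ∈ U, ∀ i j : Fin d, i ≠ j → sder ψ i j x = 0) ∧
      ∃ f : (Fin d → ℝ) → ℝ, ContDiffOn ℝ (⊤ : ℕ∞) f U ∧
        ∀ i : Fin d, ∀ x ∈ U, sder ψ i i x = eps d p i * f x) :=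
  stmt10_general d p hd U hU ψ hψ hψ0
end

section
/- Let d ≥ 3, let U ⊆ ℝ^d be open, let a_1,…,a_d : U → ℝ be smooth, and define R^l_{ijk} = δ_{il}(a_j a_k − ∂_j a_k) − δ_{jl}(a_i a_k − ∂_i a_k) + δ_{kl}(∂_i a_j − ∂_j a_i). Suppose that for all i,j the value R^k_{ijk} is independent of k, i.e. R^k_{ijk} = R^l_{ijl} on U for all i,j,k,l. Then ∂_i a_j = a_i a_j on U for all i ≠ j, and consequently ∂_i a_j = ∂_j a_i on U for all i,j; in particular every weakly stiff connection in dimension d ≥ 3 is incompressible. -/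
section CurvatureTrace

variable {d : ℕ} (a : Fin d → (Fin d → ℝ) → ℝ) (x : Fin d → ℝ) {i j k : Fin d}

theorem curvR_self_of_ne_of_ne (hki : k ≠ i) (hkj : k ≠ j) :
    curvR a i j k k x = pder (a j) i x - pder (a i) j x := by
  simp [curvR, hki.symm, hkj.symm]

theorem curvR_second_self_of_ne (hij : i ≠ j) :
    curvR a i j j j x = 2 * pder (a j) i x - pder (a i) j x - a i x * a j x := by
  simp only [curvR, if_neg hij, if_true]
  ring

theorem pder_eq_mul_of_curvR_self_eq (hij : i ≠ j) (hki : k ≠ i) (hkj : k ≠ j)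
    (h : curvR a i j j j x = curvR a i j k k x) :
    pder (a j) i x = a i x * a j x := by
  rw [curvR_second_self_of_ne a x hij, curvR_self_of_ne_of_ne a x hki hkj] at h
  linarith

end CurvatureTrace

theorem stmt12_general (d : ℕ) (hd : 3 ≤ d) (U : Set (Fin d → ℝ))
    (a : Fin d → (Fin d → ℝ) → ℝ)
    (hhol : ∀ x ∈ U, ∀ i j k l : Fin d, curvR a i j k k x = curvR a i j l l x) :
    (∀ x ∈ U, ∀ i j : Fin d, i ≠ j → pder (a j) i x = a i x * a j x) ∧
    (∀ x ∈ U, ∀ i j : Fin d, pder (a j) i x = pder (a i) j x) := by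
  have offDiag : ∀ x ∈ U, ∀ i j : Fin d, i ≠ j → pder (a j) i x = a i x * a j x := by
    intro x hx i j hij
    obtain ⟨k, hki, hkj⟩ := Fin.exists_ne_and_ne_of_two_lt i j hd
    exact pder_eq_mul_of_curvR_self_eq a x hij hki hkj (hhol x hx i j j k)
  refine ⟨offDiag, fun x hx i j => ?_⟩
  rcases eq_or_ne i j with rfl | hij
  · rfl
  · rw [offDiag x hx i j hij, offDiag x hx j i hij.symm, mul_comm]

/-- In dimension `d ≥ 3`, if the curvature coefficients of a projectively flattened
connection satisfy that `R^k_{ijk}` is independent of `k` (as does any weakly stiff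
connection), then `∂_i a_j = a_i a_j` for `i ≠ j`, hence `∂_i a_j = ∂_j a_i` for all
`i, j`; in particular the connection is incompressible. -/
theorem stmt12 (d : ℕ) (hd : 3 ≤ d) (U : Set (Fin d → ℝ)) (hU : IsOpen U)
    (a : Fin d → (Fin d → ℝ) → ℝ) (ha : ∀ i, ContDiffOn ℝ (⊤ : ℕ∞) (a i) U)
    (hhol : ∀ x ∈ U, ∀ i j k l : Fin d, curvR a i j k k x = curvR a i j l l x) :
    (∀ x ∈ U, ∀ i j : Fin d, i ≠ j → pder (a j) i x = a i x * a j x) ∧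
    (∀ x ∈ U, ∀ i j : Fin d, pder (a j) i x = pder (a i) j x) :=
  stmt12_general d hd U a hhol
end

section
/- Let U ⊆ ℝ² be open and let a₁, a₂ : U → ℝ be smooth functions satisfying on U: (1) ∂₁a₂ + ∂₂a₁ = 2 a₁ a₂, (2) ∂₁a₁ = a₁², (3) ∂₂a₂ = a₂². Then ∂₁a₂ = a₁ a₂ and ∂₂a₁ = a₁ a₂ on U; consequently all curvature coefficients R^l_{ijk} = δ_{il}(a_j a_k − ∂_j a_k) − δ_{jl}(a_i a_k − ∂_i a_k) + δ_{kl}(∂_i a_j − ∂_j a_i) vanish on U. In other words, a symmetric projectively flattened connection in dimension 2 whose first-order infinitesimal holonomies are all infinitesimal homotheties is flat. -/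
/-!
By (1), `G := ∂₁a₂ - a₁a₂` also equals `a₁a₂ - ∂₂a₁`. Differentiating (2) and (3) and using the
symmetry of second derivatives gives `∂ᵢG = 3aᵢG`. Cross-differentiating this, the integrability
condition reads `(∂₁a₂ - ∂₂a₁) G = 0`, that is `2G² = 0`. Hence `∂ⱼaₖ = aⱼaₖ` for all `j, k`, and
then every term of `R^l_{ijk}` cancels. Here `a₁, a₂` are `a 0, a 1` and `G` is `flatDefect a`.
-/

open Filter Topology

section pder

variable {d : ℕ} {f g G : (Fin d → ℝ) → ℝ} {x : Fin d → ℝ}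

theorem Filter.EventuallyEq.pder_eq (h : f =ᶠ[𝓝 x] g) (j : Fin d) :
    pder f j x = pder g j x := by
  rw [pder, pder, h.fderiv_eq]

theorem pder_neg (j : Fin d) : pder (fun y => -f y) j x = -pder f j x := by
  simp [pder]

theorem pder_sub (hf : DifferentiableAt ℝ f x) (hg : DifferentiableAt ℝ g x) (j : Fin d) :
    pder (fun y => f y - g y) j x = pder f j x - pder g j x := by
  simp [pder, fderiv_fun_sub hf hg]

theorem pder_mul (hf : DifferentiableAt ℝ f x) (hg : DifferentiableAt ℝ g x) (j : Fin d) :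
    pder (fun y => f y * g y) j x = pder f j x * g x + f x * pder g j x := by
  simp [pder, fderiv_fun_mul hf hg]
  ring

theorem pder_const_mul (hf : DifferentiableAt ℝ f x) (c : ℝ) (j : Fin d) :
    pder (fun y => c * f y) j x = c * pder f j x := by
  simp [pder, fderiv_const_mul hf c]

theorem pder_pder_comm (hf : ContDiffAt ℝ 2 f x) (i j : Fin d) :
    pder (pder f j) i x = pder (pder f i) j x := by
  have hdiff : DifferentiableAt ℝ (fderiv ℝ f) x :=
    (hf.fderiv_right (m := 1) le_rfl).differentiableAt one_ne_zero
  have hpder (v w : Fin d → ℝ) :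
      fderiv ℝ (fun y => fderiv ℝ f y v) x w = fderiv ℝ (fderiv ℝ f) x w v := by
    simp [fderiv_clm_apply hdiff (differentiableAt_const v)]
  change fderiv ℝ (fun y => fderiv ℝ f y _) x _ = fderiv ℝ (fun y => fderiv ℝ f y _) x _
  rw [hpder, hpder]
  exact hf.isSymmSndFDerivAt (by simp) _ _

theorem ContDiffAt.pder {n : WithTop ℕ∞} (hf : ContDiffAt ℝ (n + 1) f x) (j : Fin d) :
    ContDiffAt ℝ n (pder f j) x :=
  (hf.fderiv_right le_rfl).clm_apply contDiffAt_const

theorem pder_eq_three_mul_of_pder_eq_sq {i j : Fin d}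
    (hf : ContDiffAt ℝ 2 f x) (hg : DifferentiableAt ℝ g x)
    (hfi : pder f i =ᶠ[𝓝 x] fun y => f y ^ 2)
    (hG : G =ᶠ[𝓝 x] fun y => f y * g y - pder f j y)
    (hgi : pder g i x = f x * g x + G x) :
    pder G i x = 3 * f x * G x := by
  have hf' : DifferentiableAt ℝ f x := hf.differentiableAt two_ne_zero
  have hfj : DifferentiableAt ℝ (pder f j) x := (hf.pder (n := 1) j).differentiableAt one_ne_zero
  have hfij : pder (pder f j) i x = 2 * f x * pder f j x := calc
    pder (pder f j) i x = pder (pder f i) j x := pder_pder_comm hf i j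
    _ = pder (fun y => f y * f y) j x := (hfi.trans (.of_eq (by simp only [sq]))).pder_eq j
    _ = 2 * f x * pder f j x := by rw [pder_mul hf' hf']; ring
  rw [hG.pder_eq, pder_sub (hf'.fun_mul hg) hfj, pder_mul hf' hg, hfij, hfi.self_of_nhds, hgi]
  linear_combination (-2 * f x) * hG.self_of_nhds

theorem curl_mul_eq_zero_of_pder_eq_mul {c : Fin d → (Fin d → ℝ) → ℝ}
    (hG : ContDiffAt ℝ 2 G x) (hc : ∀ k, DifferentiableAt ℝ (c k) x)
    (hGc : ∀ k, pder G k =ᶠ[𝓝 x] fun y => c k y * G y) (i j : Fin d) :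
    (pder (c j) i x - pder (c i) j x) * G x = 0 := by
  have hG' : DifferentiableAt ℝ G x := hG.differentiableAt two_ne_zero
  have hsecond (k l : Fin d) :
      pder (pder G l) k x = pder (c l) k x * G x + c l x * (c k x * G x) := by
    rw [(hGc l).pder_eq k, pder_mul (hc l) hG', (hGc k).self_of_nhds]
  linear_combination hsecond j i - hsecond i j + pder_pder_comm hG i j

theorem curvR_eq_zero_of_pder_eq_mul {a : Fin d → (Fin d → ℝ) → ℝ}
    (h : ∀ j k, pder (a k) j x = a j x * a k x) (i j k l : Fin d) : curvR a i j k l x = 0 := by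
  simp only [curvR, h]
  split_ifs <;> ring

end pder

noncomputable def flatDefect (a : Fin 2 → (Fin 2 → ℝ) → ℝ) (y : Fin 2 → ℝ) : ℝ :=
  pder (a 1) 0 y - a 0 y * a 1 y

section flatDefect

variable {U : Set (Fin 2 → ℝ)} {a : Fin 2 → (Fin 2 → ℝ) → ℝ}

theorem flatDefect_eq_of_pder_add
    (h1 : ∀ x ∈ U, pder (a 1) 0 x + pder (a 0) 1 x = 2 * a 0 x * a 1 x) {x : Fin 2 → ℝ}
    (hx : x ∈ U) : flatDefect a x = a 0 x * a 1 x - pder (a 0) 1 x := by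
  rw [flatDefect]
  linear_combination h1 x hx

theorem pder_flatDefect (hU : IsOpen U) (ha : ∀ k, ContDiffOn ℝ 3 (a k) U)
    (h1 : ∀ x ∈ U, pder (a 1) 0 x + pder (a 0) 1 x = 2 * a 0 x * a 1 x)
    (h2 : ∀ x ∈ U, pder (a 0) 0 x = a 0 x ^ 2)
    (h3 : ∀ x ∈ U, pder (a 1) 1 x = a 1 x ^ 2) {x : Fin 2 → ℝ} (hx : x ∈ U) (k : Fin 2) :
    pder (flatDefect a) k x = 3 * a k x * flatDefect a x := by
  have hU_nhds : U ∈ 𝓝 x := hU.mem_nhds hx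
  have hC2 (k : Fin 2) : ContDiffAt ℝ 2 (a k) x := ((ha k).contDiffAt hU_nhds).of_le (by norm_num)
  have hdiff (k : Fin 2) : DifferentiableAt ℝ (a k) x := (hC2 k).differentiableAt two_ne_zero
  match k with
  | 0 =>
    exact pder_eq_three_mul_of_pder_eq_sq (hC2 0) (hdiff 1) (eventually_of_mem hU_nhds h2)
      (eventually_of_mem hU_nhds fun y hy => flatDefect_eq_of_pder_add h1 hy)
      (by rw [flatDefect]; ring)
  | 1 =>
    -- swapping the two coordinates turns the defect into its negative
    have h := pder_eq_three_mul_of_pder_eq_sq (G := fun y => -flatDefect a y) (j := 0)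
      (hC2 1) (hdiff 0) (eventually_of_mem hU_nhds h3)
      (.of_eq (funext fun y => by rw [flatDefect]; ring))
      (by linear_combination flatDefect_eq_of_pder_add h1 hx)
    rw [pder_neg] at h
    linear_combination -h

theorem flatDefect_eq_zero (hU : IsOpen U) (ha : ∀ k, ContDiffOn ℝ 3 (a k) U)
    (h1 : ∀ x ∈ U, pder (a 1) 0 x + pder (a 0) 1 x = 2 * a 0 x * a 1 x)
    (h2 : ∀ x ∈ U, pder (a 0) 0 x = a 0 x ^ 2)
    (h3 : ∀ x ∈ U, pder (a 1) 1 x = a 1 x ^ 2) {x : Fin 2 → ℝ} (hx : x ∈ U) :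
    flatDefect a x = 0 := by
  have hU_nhds : U ∈ 𝓝 x := hU.mem_nhds hx
  have hC3 (k : Fin 2) : ContDiffAt ℝ 3 (a k) x := (ha k).contDiffAt hU_nhds
  have hdiff (k : Fin 2) : DifferentiableAt ℝ (a k) x := (hC3 k).differentiableAt (by norm_num)
  have hsmooth : ContDiffAt ℝ 2 (flatDefect a) x :=
    ((hC3 1).pder 0).sub (((hC3 0).mul (hC3 1)).of_le (by norm_num))
  have hcurl := curl_mul_eq_zero_of_pder_eq_mul (c := fun k y => 3 * a k y) hsmooth
    (fun k => (hdiff k).const_mul 3)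
    (fun k => eventually_of_mem hU_nhds fun y hy => pder_flatDefect hU ha h1 h2 h3 hy k) 0 1
  rw [pder_const_mul (hdiff 1), pder_const_mul (hdiff 0)] at hcurl
  have hdef : flatDefect a x = pder (a 1) 0 x - a 0 x * a 1 x := rfl
  have hsq : 6 * flatDefect a x ^ 2 = 0 := by
    linear_combination hcurl + 3 * flatDefect a x * (hdef + flatDefect_eq_of_pder_add h1 hx)
  simpa using hsq

end flatDefect

/-- A symmetric projectively flattened connection in dimension 2 whose first-order
infinitesimal holonomies are all infinitesimal homotheties (equations (1)–(3)) is
flat: `∂₁a₂ = ∂₂a₁ = a₁a₂` and all curvature coefficients vanish. -/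
theorem stmt15 (U : Set (Fin 2 → ℝ)) (hU : IsOpen U)
    (a : Fin 2 → (Fin 2 → ℝ) → ℝ) (ha : ∀ i, ContDiffOn ℝ (⊤ : ℕ∞) (a i) U)
    (h1 : ∀ x ∈ U, pder (a 1) 0 x + pder (a 0) 1 x = 2 * a 0 x * a 1 x)
    (h2 : ∀ x ∈ U, pder (a 0) 0 x = a 0 x ^ 2)
    (h3 : ∀ x ∈ U, pder (a 1) 1 x = a 1 x ^ 2) :
    (∀ x ∈ U, pder (a 1) 0 x = a 0 x * a 1 x ∧ pder (a 0) 1 x = a 0 x * a 1 x) ∧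
    (∀ x ∈ U, ∀ i j k l : Fin 2, curvR a i j k l x = 0) := by
  have hC3 (k : Fin 2) : ContDiffOn ℝ 3 (a k) U := (ha k).of_le (WithTop.coe_le_coe.mpr le_top)
  have hpder : ∀ x ∈ U, ∀ j k : Fin 2, pder (a k) j x = a j x * a k x := by
    intro x hx
    have hzero := flatDefect_eq_zero hU hC3 h1 h2 h3 hx
    rw [flatDefect] at hzero
    simp only [Fin.forall_fin_two]
    refine ⟨⟨?_, ?_⟩, ?_, ?_⟩
    · linear_combination h2 x hx
    · linear_combination hzero
    · linear_combination h1 x hx - hzero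
    · linear_combination h3 x hx
  refine ⟨fun x hx => ⟨hpder x hx 0 1, ?_⟩, fun x hx => curvR_eq_zero_of_pder_eq_mul (hpder x hx)⟩
  linear_combination hpder x hx 1 0
end

section
/- Let d ≥ 2 and let B be the open unit ball of ℝ^d for the standard Euclidean norm ‖·‖, with inner product x·y. For every x₀ ∈ B and every v₀ ∈ ℝ^d there exists a C² curve γ : ℝ → ℝ^d such that γ(0) = x₀, γ'(0) = v₀, γ(t) ∈ B for all t ∈ ℝ, and γ''(t) = ( 4 (γ(t)·γ'(t)) / (‖γ(t)‖² − 1) ) · γ'(t) for all t ∈ ℝ. In other words, the canonical model S⁻₋₁(d,0) — the stiff connection on the open unit ball with potential ψ(x) = ‖x‖² − 1 — is geodesically complete. -/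
/-!
Geodesics through `x₀` with velocity `v₀` are reparametrised lines `γ t = x₀ + f t • v₀`. With
`p s = ‖x₀ + s • v₀‖² - 1`, the geodesic equation becomes `f'' = 2 (p ∘ f)' / (p ∘ f) * f'`, which
has the first integral `f' = p(f)² / p(0)²`. Since `x₀` lies in the ball, for `v₀ ≠ 0` the
quadratic `p` has roots `α < 0 < β` and is negative between them; the time `∫ p(0)² / p²` needed
to reach a root diverges because of the double pole, so the inverse of a primitive of
`p(0)² / p²` on `(α, β)` is a solution defined for all times and staying in the ball.
-/

open scoped RealInnerProductSpace

open Filter Set Topology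

theorem exists_orderIso_Ioo_eq_of_tendsto {G g : ℝ → ℝ} {α β : ℝ} (hαβ : α < β)
    (hG : ∀ x ∈ Ioo α β, HasDerivAt G (g x) x) (hg : ∀ x ∈ Ioo α β, 0 < g x)
    (hα : Tendsto G (𝓝[>] α) atBot) (hβ : Tendsto G (𝓝[<] β) atTop) :
    ∃ e : Ioo α β ≃o ℝ, ∀ x, e x = G x := by
  have hcont : ContinuousOn G (Ioo α β) := fun x hx => (hG x hx).continuousAt.continuousWithinAt
  have hmono : StrictMonoOn G (Ioo α β) :=
    strictMonoOn_of_hasDerivWithinAt_pos (convex_Ioo α β) hcont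
      (by simpa only [interior_Ioo] using fun x hx => (hG x hx).hasDerivWithinAt)
      (by simpa only [interior_Ioo] using hg)
  have hsurj : G '' Ioo α β = univ := univ_subset_iff.1 <|
    hcont.surjOn_of_tendsto (nonempty_Ioo.2 hαβ) ((tendsto_comp_coe_Ioo_atBot hαβ).2 hα)
      ((tendsto_comp_coe_Ioo_atTop hαβ).2 hβ)
  exact ⟨(hmono.orderIso _ _).trans <| (OrderIso.setCongr _ _ hsurj).trans OrderIso.Set.univ,
    fun x => rfl⟩

theorem exists_hasDerivAt_inv_comp {G g : ℝ → ℝ} {α β x₀ : ℝ} (hx₀ : x₀ ∈ Ioo α β)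
    (hG : ∀ x ∈ Ioo α β, HasDerivAt G (g x) x) (hg : ∀ x ∈ Ioo α β, 0 < g x)
    (hα : Tendsto G (𝓝[>] α) atBot) (hβ : Tendsto G (𝓝[<] β) atTop) :
    ∃ f : ℝ → ℝ, f 0 = x₀ ∧ ∀ t, f t ∈ Ioo α β ∧ HasDerivAt f (g (f t))⁻¹ t := by
  obtain ⟨e, he⟩ := exists_orderIso_Ioo_eq_of_tendsto (hx₀.1.trans hx₀.2) hG hg hα hβ
  have hinv (y : ℝ) : HasDerivAt (fun y => (e.symm y : ℝ)) (g (e.symm y))⁻¹ y :=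
    .of_local_left_inverse (continuous_subtype_val.comp e.symm.continuous).continuousAt
      (hG _ (e.symm y).2) (hg _ (e.symm y).2).ne'
      (.of_forall fun z => by rw [← he, e.apply_symm_apply])
  refine ⟨fun t => e.symm (G x₀ + t), ?_, fun t => ⟨(e.symm _).2, (hinv _).comp_const_add _ _⟩⟩
  simp [← he ⟨x₀, hx₀⟩]

noncomputable def logSubInv (a b u : ℝ) : ℝ := a * Real.log u - b * u⁻¹

theorem hasDerivAt_logSubInv (a b : ℝ) {u : ℝ} (hu : 0 < u) :
    HasDerivAt (logSubInv a b) (a / u + b / u ^ 2) u := by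
  have := ((Real.hasDerivAt_log hu.ne').const_mul a).sub ((hasDerivAt_inv hu.ne').const_mul b)
  exact this.congr_deriv (by ring)

theorem tendsto_logSubInv_nhdsGT_zero {a b : ℝ} (ha : 0 < a) (hb : 0 < b) :
    Tendsto (logSubInv a b) (𝓝[>] 0) atBot :=
  ((tendsto_const_mul_atBot_of_pos ha).2 Real.tendsto_log_nhdsGT_zero).atBot_add_atBot
    (tendsto_neg_atTop_atBot.comp ((tendsto_const_mul_atTop_of_pos hb).2 tendsto_inv_nhdsGT_zero))

/-- Partial fractions: with `δ = β - α`, `((x - α) (x - β))⁻² = δ⁻² ((x - α)⁻² + (β - x)⁻²) +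
2 δ⁻³ ((x - α)⁻¹ + (β - x)⁻¹)`. -/
noncomputable def invSqQuadPrimitive (α β x : ℝ) : ℝ :=
  logSubInv (2 / (β - α) ^ 3) (1 / (β - α) ^ 2) (x - α) -
    logSubInv (2 / (β - α) ^ 3) (1 / (β - α) ^ 2) (β - x)

theorem hasDerivAt_invSqQuadPrimitive {α β x : ℝ} (hx : x ∈ Ioo α β) :
    HasDerivAt (invSqQuadPrimitive α β) (((x - α) * (x - β)) ^ 2)⁻¹ x := by
  set a := 2 / (β - α) ^ 3
  set b := 1 / (β - α) ^ 2
  have hu : 0 < x - α := sub_pos.2 hx.1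
  have hv : 0 < β - x := sub_pos.2 hx.2
  have := ((hasDerivAt_logSubInv a b hu).comp x ((hasDerivAt_id x).sub_const α)).sub
    ((hasDerivAt_logSubInv a b hv).comp x ((hasDerivAt_id x).const_sub β))
  refine this.congr_deriv ?_
  have key : ∀ u v : ℝ, 0 < u → 0 < v → 2 / (u + v) ^ 3 / u + 1 / (u + v) ^ 2 / u ^ 2 +
      (2 / (u + v) ^ 3 / v + 1 / (u + v) ^ 2 / v ^ 2) = ((u * v) ^ 2)⁻¹ := by
    intro u v hu hv
    field_simp
    ring
  have hsum := key (x - α) (β - x) hu hv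
  rw [show x - α + (β - x) = β - α by ring] at hsum
  rw [show (x - α) * (x - β) = -((x - α) * (β - x)) by ring, neg_sq, ← hsum]
  ring

theorem tendsto_invSqQuadPrimitive_nhdsGT {α β : ℝ} (h : α < β) :
    Tendsto (invSqQuadPrimitive α β) (𝓝[>] α) atBot := by
  have hδ : 0 < β - α := sub_pos.2 h
  have hsing : Tendsto (fun x => logSubInv (2 / (β - α) ^ 3) (1 / (β - α) ^ 2) (x - α))
      (𝓝[>] α) atBot := by
    refine (tendsto_logSubInv_nhdsGT_zero (by positivity) (by positivity)).comp ?_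
    have := (map_subRight_nhdsGT (c := α) (a := α)).le
    rwa [sub_self] at this
  have hreg : ContinuousAt (fun x => logSubInv (2 / (β - α) ^ 3) (1 / (β - α) ^ 2) (β - x)) α :=
    ContinuousAt.comp (x := α) (f := fun x => β - x) (hasDerivAt_logSubInv _ _ hδ).continuousAt
      (by fun_prop)
  exact hsing.atBot_add (hreg.tendsto.mono_left nhdsWithin_le_nhds).neg

theorem tendsto_invSqQuadPrimitive_nhdsLT {α β : ℝ} (h : α < β) :
    Tendsto (invSqQuadPrimitive α β) (𝓝[<] β) atTop := by
  have hδ : 0 < β - α := sub_pos.2 h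
  have hsing : Tendsto (fun x => logSubInv (2 / (β - α) ^ 3) (1 / (β - α) ^ 2) (β - x))
      (𝓝[<] β) atBot := by
    refine (tendsto_logSubInv_nhdsGT_zero (by positivity) (by positivity)).comp ?_
    have := (map_subLeft_nhdsLT (c := β) (a := β)).le
    rwa [sub_self] at this
  have hreg : ContinuousAt (fun x => logSubInv (2 / (β - α) ^ 3) (1 / (β - α) ^ 2) (x - α)) β :=
    ContinuousAt.comp (x := β) (f := fun x => x - α) (hasDerivAt_logSubInv _ _ hδ).continuousAt
      (by fun_prop)
  exact (hreg.tendsto.mono_left nhdsWithin_le_nhds).add_atTop (tendsto_neg_atBot_atTop.comp hsing)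

theorem exists_hasDerivAt_eq_mul_sq_sub_mul_sub {α β x₀ K : ℝ} (hx₀ : x₀ ∈ Ioo α β)
    (hK : 0 < K) :
    ∃ f : ℝ → ℝ, f 0 = x₀ ∧
      ∀ t, f t ∈ Ioo α β ∧ HasDerivAt f (K * ((f t - α) * (f t - β)) ^ 2) t := by
  have hαβ : α < β := hx₀.1.trans hx₀.2
  have hne : ∀ x ∈ Ioo α β, (x - α) * (x - β) ≠ 0 := fun x hx =>
    mul_ne_zero (sub_pos.2 hx.1).ne' (sub_neg.2 hx.2).ne
  obtain ⟨f, hf0, hf⟩ := exists_hasDerivAt_inv_comp (G := fun x => K⁻¹ * invSqQuadPrimitive α β x)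
    (g := fun x => (K * ((x - α) * (x - β)) ^ 2)⁻¹) hx₀
    (fun x hx => ((hasDerivAt_invSqQuadPrimitive hx).const_mul K⁻¹).congr_deriv (mul_inv _ _).symm)
    (fun x hx => by have := hne x hx; positivity)
    ((tendsto_const_mul_atBot_of_pos (inv_pos.2 hK)).2 (tendsto_invSqQuadPrimitive_nhdsGT hαβ))
    ((tendsto_const_mul_atTop_of_pos (inv_pos.2 hK)).2 (tendsto_invSqQuadPrimitive_nhdsLT hαβ))
  exact ⟨f, hf0, fun t => ⟨(hf t).1, by simpa only [inv_inv] using (hf t).2⟩⟩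

theorem exists_quadratic_eq_mul_sub_mul_sub {a b c : ℝ} (ha : 0 < a) (hc : c < 0) :
    ∃ α < 0, ∃ β > 0, ∀ s, a * s ^ 2 + b * s + c = a * ((s - α) * (s - β)) := by
  set r := √(b ^ 2 - 4 * a * c)
  have hr : r ^ 2 = b ^ 2 - 4 * a * c := Real.sq_sqrt (by nlinarith [sq_nonneg b])
  have hbr : |b| < r := Real.lt_sqrt (abs_nonneg b) |>.2 (by rw [sq_abs]; nlinarith)
  refine ⟨(-b - r) / (2 * a), div_neg_of_neg_of_pos (by linarith [neg_abs_le b]) (by positivity),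
    (-b + r) / (2 * a), div_pos (by linarith [le_abs_self b]) (by positivity), fun s => ?_⟩
  field_simp
  linear_combination hr

variable {E : Type*} [NormedAddCommGroup E] [InnerProductSpace ℝ E]

theorem exists_sq_norm_add_smul_sub_one_eq {x₀ : E} (hx₀ : ‖x₀‖ < 1) {v : E} (hv : v ≠ 0) :
    ∃ α < 0, ∃ β > 0, ∀ s : ℝ, ‖x₀ + s • v‖ ^ 2 - 1 = ‖v‖ ^ 2 * ((s - α) * (s - β)) := by
  have hc : ‖x₀‖ ^ 2 - 1 < 0 := by nlinarith [norm_nonneg x₀]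
  obtain ⟨α, hα, β, hβ, h⟩ := exists_quadratic_eq_mul_sub_mul_sub (b := 2 * ⟪x₀, v⟫)
    (pow_pos (norm_pos_iff.2 hv) 2) hc
  refine ⟨α, hα, β, hβ, fun s => ?_⟩
  rw [← h, norm_add_sq_real, real_inner_smul_right, norm_smul, mul_pow, Real.norm_eq_abs, sq_abs]
  ring

theorem exists_hasDerivAt_sq_norm_add_smul_sub_one {x₀ : E} (hx₀ : ‖x₀‖ < 1) (v : E) :
    ∃ f : ℝ → ℝ, f 0 = 0 ∧ ∀ t, ‖x₀ + f t • v‖ < 1 ∧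
      HasDerivAt f (((‖x₀‖ ^ 2 - 1) ^ 2)⁻¹ * (‖x₀ + f t • v‖ ^ 2 - 1) ^ 2) t := by
  have hc : ‖x₀‖ ^ 2 - 1 ≠ 0 := by nlinarith [norm_nonneg x₀]
  rcases eq_or_ne v 0 with rfl | hv
  · refine ⟨id, rfl, fun t => ⟨by simpa using hx₀, ?_⟩⟩
    simpa [inv_mul_cancel₀ (pow_ne_zero 2 hc)] using hasDerivAt_id t
  obtain ⟨α, hα, β, hβ, hquad⟩ := exists_sq_norm_add_smul_sub_one_eq hx₀ hv
  obtain ⟨f, hf0, hf⟩ := exists_hasDerivAt_eq_mul_sq_sub_mul_sub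
    (K := ((‖x₀‖ ^ 2 - 1) ^ 2)⁻¹ * (‖v‖ ^ 2) ^ 2) ⟨hα, hβ⟩
    (by have := norm_ne_zero_iff.2 hv; positivity)
  refine ⟨f, hf0, fun t => ⟨?_, ?_⟩⟩
  · have hneg : (f t - α) * (f t - β) < 0 :=
      mul_neg_of_pos_of_neg (sub_pos.2 (hf t).1.1) (sub_neg.2 (hf t).1.2)
    have hsq : ‖x₀ + f t • v‖ ^ 2 < 1 := by
      nlinarith [hquad (f t), pow_pos (norm_pos_iff.2 hv) 2]
    exact (pow_lt_one_iff_of_nonneg (norm_nonneg _) two_ne_zero).1 hsq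
  · rw [hquad]
    exact (hf t).2.congr_deriv (by ring)

theorem contDiff_succ_of_hasDerivAt_comp {F : Type*} [NormedAddCommGroup F] [NormedSpace ℝ F]
    {φ : F → F} {γ : ℝ → F} (hγ : ∀ t, HasDerivAt γ (φ (γ t)) t) {n : ℕ} (hφ : ContDiff ℝ n φ) :
    ContDiff ℝ (n + 1) γ := by
  have hdiff : Differentiable ℝ γ := fun t => (hγ t).differentiableAt
  have hderiv : deriv γ = φ ∘ γ := funext fun t => (hγ t).deriv
  refine contDiff_succ_iff_deriv.2 ⟨hdiff, by simp, hderiv ▸ ?_⟩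
  induction n with
  | zero => exact contDiff_zero.2 (hφ.continuous.comp hdiff.continuous)
  | succ m ih =>
    have hγ' : ContDiff ℝ (m + 1) γ :=
      contDiff_succ_iff_deriv.2 ⟨hdiff, by simp, hderiv ▸ ih hφ.of_succ⟩
    exact hφ.comp (by exact_mod_cast hγ')

theorem deriv_deriv_eq_of_hasDerivAt_smul_const {γ : ℝ → E} {K : ℝ} {v : E}
    (hγ : ∀ t, HasDerivAt γ ((K * (‖γ t‖ ^ 2 - 1) ^ 2) • v) t) {t : ℝ}
    (ht : ‖γ t‖ ^ 2 - 1 ≠ 0) :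
    deriv (deriv γ) t = (4 * ⟪γ t, deriv γ t⟫ / (‖γ t‖ ^ 2 - 1)) • deriv γ t := by
  have hderiv : deriv γ = fun t => (K * (‖γ t‖ ^ 2 - 1) ^ 2) • v := funext fun t => (hγ t).deriv
  have h2 := ((((hγ t).norm_sq.sub_const 1).pow 2).const_mul K).smul_const v
  rw [hderiv, show deriv (fun t => (K * (‖γ t‖ ^ 2 - 1) ^ 2) • v) t = _ from h2.deriv, smul_smul,
    real_inner_smul_right]
  congr 1
  field_simp
  ring

theorem stmt18_general (d : ℕ)
    (x₀ : EuclideanSpace ℝ (Fin d)) (hx₀ : ‖x₀‖ < 1)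
    (v₀ : EuclideanSpace ℝ (Fin d)) :
    ∃ γ : ℝ → EuclideanSpace ℝ (Fin d),
      ContDiff ℝ 2 γ ∧ γ 0 = x₀ ∧ deriv γ 0 = v₀ ∧ (∀ t : ℝ, ‖γ t‖ < 1) ∧
      ∀ t : ℝ, deriv (deriv γ) t =
        (4 * ⟪γ t, deriv γ t⟫ / (‖γ t‖ ^ 2 - 1)) • deriv γ t := by
  obtain ⟨f, hf0, hf⟩ := exists_hasDerivAt_sq_norm_add_smul_sub_one hx₀ v₀
  set K := ((‖x₀‖ ^ 2 - 1) ^ 2)⁻¹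
  set γ := fun t => x₀ + f t • v₀
  have hγ (t : ℝ) : HasDerivAt γ ((K * (‖γ t‖ ^ 2 - 1) ^ 2) • v₀) t :=
    ((hf t).2.smul_const v₀).const_add x₀
  have hψ (t : ℝ) : ‖γ t‖ ^ 2 - 1 ≠ 0 := by nlinarith [(hf t).1, norm_nonneg (γ t)]
  have hφ : ContDiff ℝ 1 fun x : EuclideanSpace ℝ (Fin d) => (K * (‖x‖ ^ 2 - 1) ^ 2) • v₀ :=
    (contDiff_const.mul ((contDiff_norm_sq ℝ).sub contDiff_const |>.pow 2)).smul contDiff_const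
  have hc : ‖x₀‖ ^ 2 - 1 ≠ 0 := by nlinarith [norm_nonneg x₀]
  refine ⟨γ, contDiff_succ_of_hasDerivAt_comp hγ hφ, by simp [γ, hf0], ?_, fun t => (hf t).1,
    fun t => deriv_deriv_eq_of_hasDerivAt_smul_const hγ (hψ t)⟩
  simp [(hγ 0).deriv, γ, hf0, K, inv_mul_cancel₀ (pow_ne_zero 2 hc)]

/-- The canonical model `S⁻₋₁(d,0)` — the stiff connection on the open unit ball of
Euclidean space with potential `ψ(x) = ‖x‖² − 1`, whose geodesic equation is
`γ'' = (4(γ·γ')/(‖γ‖²−1)) γ'` — is geodesically complete: through every point of the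
ball and every initial velocity there is a geodesic defined on all of `ℝ` and staying
in the ball. -/
theorem stmt18 (d : ℕ) (hd : 2 ≤ d)
    (x₀ : EuclideanSpace ℝ (Fin d)) (hx₀ : ‖x₀‖ < 1)
    (v₀ : EuclideanSpace ℝ (Fin d)) :
    ∃ γ : ℝ → EuclideanSpace ℝ (Fin d),
      ContDiff ℝ 2 γ ∧ γ 0 = x₀ ∧ deriv γ 0 = v₀ ∧ (∀ t : ℝ, ‖γ t‖ < 1) ∧
      ∀ t : ℝ, deriv (deriv γ) t =
        (4 * ⟪γ t, deriv γ t⟫ / (‖γ t‖ ^ 2 - 1)) • deriv γ t :=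
  stmt18_general d x₀ hx₀ v₀
end

section
/- Let 𝔻 ⊆ ℂ be the open unit disk, let f : ℂ → ℂ be meromorphic on 𝔻 with set of poles P ⊆ 𝔻, and suppose z̄ + f(z) ≠ 0 for every z ∈ 𝔻 ∖ P. Let A : 𝔻 → ℂ be the smooth function with A(z) = −2/(z̄ + f(z)) on 𝔻 ∖ P and A = 0 on P, and write a₁ = Re A, a₂ = Im A. Assume that the associated connection is geodesically complete, i.e. every maximal C² solution γ : I → 𝔻 of γ''(t) = −2 ( a₁(γ(t)) γ₁'(t) + a₂(γ(t)) γ₂'(t) ) · γ'(t) is defined on I = ℝ. Then one of the following holds: (A) f(z) = −1/z for all z ∈ 𝔻 ∖ {0}; or (B) f does not extend to any boundary point, i.e. there exist no z₀ with |z₀| = 1, no ε > 0, and no meromorphic function on 𝔻 ∪ B(z₀,ε) whose restriction to 𝔻 equals f. -/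
/-!
A geodesic leaving `r w` (`‖w‖ = 1`, `r < 1`) with velocity `w` keeps its direction: its velocity
is `e^{C(t)} w` with `C' = -2 ⟪A(γ), γ'⟫`. If `‖A‖ ≤ M` near `w`, then `C + 2M s` is nondecreasing,
`s` being the distance travelled, so the speed stays bounded below as long as `γ` is near `w`, and
`γ` reaches the circle in finite time. Completeness therefore makes `A` unbounded at every point of
the circle; since `‖A z‖ ≤ 2 / ‖z̄ + f z‖`, an extension `g` of `f` satisfies `w̄ + g(w) = 0`, i.e.
`w g(w) + 1 = 0`, wherever it is continuous on the circle. These points accumulate at `z₀`, so by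
the identity principle `z g(z) + 1` vanishes identically on the connected set `𝔻 ∪ B(z₀, ε)`.
Finally, continuity of `A` gives `A z = -2 / (z̄ - 1/z) ≠ 0` at every `z ∈ 𝔻 ∖ {0}`, which excludes
`z ∈ P` and pins down `f(z) = -1/z`.
-/

open ComplexConjugate
open Metric Filter Topology Set

theorem eq_exp_sub_smul_of_hasDerivAt {E : Type*} [NormedAddCommGroup E] [NormedSpace ℝ E]
    {v : ℝ → E} {C c : ℝ → ℝ} (hC : ∀ t, HasDerivAt C (c t) t)
    (hv : ∀ t, HasDerivAt v (c t • v t) t) (t : ℝ) :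
    v t = Real.exp (C t - C 0) • v 0 := by
  have hderiv : ∀ t, HasDerivAt (fun t => Real.exp (-C t) • v t) 0 t := fun t => by
    refine ((hC t).neg.exp.smul (hv t)).congr_deriv ?_
    rw [smul_smul]
    module
  have hconst := is_const_of_deriv_eq_zero (fun t => (hderiv t).differentiableAt)
    (fun t => (hderiv t).deriv) t 0
  rw [sub_eq_add_neg, Real.exp_add, mul_smul, ← hconst, smul_smul, ← Real.exp_add,
    add_neg_cancel, Real.exp_zero, one_smul]

theorem monotoneOn_Ici_of_hasDerivAt {φ φ' : ℝ → ℝ} {a : ℝ} (hφ : ∀ t, HasDerivAt φ (φ' t) t)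
    (hφ' : ∀ t, a ≤ t → 0 ≤ φ' t) : MonotoneOn φ (Ici a) :=
  monotoneOn_of_hasDerivWithinAt_nonneg (convex_Ici a)
    (fun t _ => (hφ t).continuousAt.continuousWithinAt) (fun t _ => (hφ t).hasDerivWithinAt)
    (fun t ht => hφ' t (interior_subset ht))

theorem exists_lt_of_hasDerivAt_exp {s C c : ℝ → ℝ} {K : ℝ} (hK : 0 ≤ K)
    (hs : ∀ t, HasDerivAt s (Real.exp (C t)) t) (hC : ∀ t, HasDerivAt C (c t) t)
    (hc : ∀ t, 0 ≤ t → -(K * Real.exp (C t)) ≤ c t) (B : ℝ) : ∃ t, 0 ≤ t ∧ B < s t := by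
  by_contra! hB
  -- `C + K s` is nondecreasing, so `C ≥ m` as long as `s ≤ B`; then `s' ≥ exp m`
  set m := C 0 + K * (s 0 - B)
  have hCm : ∀ t, 0 ≤ t → m ≤ C t := fun t ht => by
    have := monotoneOn_Ici_of_hasDerivAt (φ := fun t => C t + K * s t)
      (fun t => (hC t).add ((hs t).const_mul K)) (fun t ht => by linarith [hc t ht])
      self_mem_Ici ht ht
    nlinarith [hB t ht]
  have hlin := monotoneOn_Ici_of_hasDerivAt (φ := fun t => s t - Real.exp m * t)
    (fun t => (hs t).sub ((hasDerivAt_id t).const_mul (Real.exp m)))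
    (fun t ht => by simpa using Real.exp_le_exp.2 (hCm t ht))
  set T := (|B - s 0| + 1) / Real.exp m
  have hT : 0 ≤ T := by positivity
  have hexpT : Real.exp m * T = |B - s 0| + 1 := mul_div_cancel₀ _ (Real.exp_pos m).ne'
  have hsT := hlin self_mem_Ici hT hT
  simp only [mul_zero, sub_zero] at hsT
  linarith [hB T hT, le_abs_self (B - s 0)]

theorem exists_notMem_ball_of_hasDerivAt_smul {E : Type*} [NormedAddCommGroup E]
    [NormedSpace ℝ E] {γ v : ℝ → E} {c : ℝ → ℝ} {w : E} {r δ K : ℝ} (hw : ‖w‖ = 1)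
    (hrδ : 1 - δ < r) (hK : 0 ≤ K) (hγ : ∀ t, HasDerivAt γ (v t) t)
    (hv : ∀ t, HasDerivAt v (c t • v t) t) (hc : Continuous c) (hγ0 : γ 0 = r • w)
    (hv0 : v 0 = w) (hcK : ∀ t, γ t ∈ ball w δ ∩ ball 0 1 → -(K * ‖v t‖) ≤ c t) :
    ∃ t, γ t ∉ ball (0 : E) 1 := by
  by_contra! hball
  set C : ℝ → ℝ := fun t => ∫ τ in (0 : ℝ)..t, c τ
  have hC : ∀ t, HasDerivAt C (c t) t := fun t => (hc.integral_hasStrictDerivAt 0 t).hasDerivAt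
  have hvC : ∀ t, v t = Real.exp (C t) • w := fun t => by
    simp [eq_exp_sub_smul_of_hasDerivAt hC hv t, hv0, C]
  have hexpC : Continuous fun t => Real.exp (C t) :=
    Real.continuous_exp.comp (continuous_iff_continuousAt.2 fun t => (hC t).continuousAt)
  set s : ℝ → ℝ := fun t => ∫ τ in (0 : ℝ)..t, Real.exp (C τ)
  have hs : ∀ t, HasDerivAt s (Real.exp (C t)) t := fun t =>
    (hexpC.integral_hasStrictDerivAt 0 t).hasDerivAt
  have hγs : ∀ t, γ t = (r + s t) • w := fun t => by
    have hderiv : ∀ t, HasDerivAt (fun t => γ t - (r + s t) • w) 0 t := fun t => by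
      refine ((hγ t).sub (((hs t).const_add r).smul_const w)).congr_deriv ?_
      rw [hvC, sub_self]
    have := is_const_of_deriv_eq_zero (fun t => (hderiv t).differentiableAt)
      (fun t => (hderiv t).deriv) t 0
    simpa [hγ0, s, sub_eq_zero] using this
  have hs_nonneg : ∀ t, 0 ≤ t → 0 ≤ s t := fun t ht =>
    intervalIntegral.integral_nonneg ht fun τ _ => (Real.exp_pos _).le
  have hs_lt : ∀ t, 0 ≤ t → r + s t < 1 := fun t ht => by
    have := hball t
    rw [mem_ball_zero_iff, hγs, norm_smul, hw, mul_one, Real.norm_eq_abs] at this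
    exact (le_abs_self _).trans_lt this
  have hmem : ∀ t, 0 ≤ t → γ t ∈ ball w δ := fun t ht => by
    rw [mem_ball, dist_eq_norm, hγs, show (r + s t) • w - w = (r + s t - 1) • w by module,
      norm_smul, hw, mul_one, Real.norm_eq_abs, abs_of_neg (by linarith [hs_lt t ht])]
    linarith [hs_nonneg t ht]
  obtain ⟨t, ht, hlt⟩ := exists_lt_of_hasDerivAt_exp hK hs hC (fun t ht => by
    simpa [hvC, norm_smul, hw] using hcK t ⟨hmem t ht, hball t⟩) (1 - r)
  linarith [hs_lt t ht]

/-- Completeness of the connection with Christoffel symbols `Γᵏᵢⱼ = δᵢₖ aⱼ + δⱼₖ aᵢ` on the unit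
disk, where `A = a₁ + i a₂`: every geodesic `γ'' = -2 (a₁(γ) γ₁' + a₂(γ) γ₂') γ'` extends to `ℝ`. -/
def GeodesicallyComplete (A : ℂ → ℂ) : Prop :=
  ∀ x₀ ∈ ball (0 : ℂ) 1, ∀ v₀ : ℂ,
    ∃ γ : ℝ → ℂ, ContDiff ℝ 2 γ ∧ γ 0 = x₀ ∧ deriv γ 0 = v₀ ∧
      (∀ t : ℝ, γ t ∈ ball (0 : ℂ) 1) ∧
      ∀ t : ℝ, deriv (deriv γ) t =
        (-2 * ((A (γ t)).re * (deriv γ t).re + (A (γ t)).im * (deriv γ t).im)) • deriv γ t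

theorem GeodesicallyComplete.not_eventually_norm_le {A : ℂ → ℂ}
    (hcomplete : GeodesicallyComplete A)
    (hAc : ContinuousOn A (ball 0 1)) {w : ℂ} (hw : ‖w‖ = 1) (M : ℝ) :
    ¬∀ᶠ z in 𝓝[ball 0 1] w, ‖A z‖ ≤ M := by
  intro hM
  obtain ⟨δ, hδ, hδM⟩ := Metric.mem_nhdsWithin_iff.1 hM
  set r := 1 - min δ 1 / 2 with hr_def
  have hδ1 : 0 < min δ 1 := lt_min hδ one_pos
  have hrδ : 1 - δ < r := by linarith [min_le_left δ 1]
  have hr : r • w ∈ ball w δ ∩ ball 0 1 := by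
    constructor
    · rw [mem_ball, dist_eq_norm, show r • w - w = (r - 1) • w by module, norm_smul, hw,
        Real.norm_eq_abs, abs_of_neg (by linarith)]
      linarith
    · rw [mem_ball_zero_iff, norm_smul, hw, mul_one, Real.norm_eq_abs, abs_lt]
      constructor <;> linarith [min_le_right δ 1]
  have hM0 : 0 ≤ M := (norm_nonneg _).trans (hδM hr)
  obtain ⟨γ, hγ, hγ0, hγ'0, hball, hode⟩ := hcomplete _ hr.2 w
  have hγ' : ∀ t, HasDerivAt γ (deriv γ t) t := fun t =>
    ((hγ.differentiable two_ne_zero) t).hasDerivAt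
  have hγ'' : ∀ t, HasDerivAt (deriv γ) (deriv (deriv γ) t) t := fun t =>
    ((hγ.deriv' (n := 1)).differentiable one_ne_zero t).hasDerivAt
  have hAγ : Continuous (A ∘ γ) := hAc.comp_continuous hγ.continuous hball
  have hAγre := Complex.continuous_re.comp hAγ
  have hAγim := Complex.continuous_im.comp hAγ
  have hγ'c := hγ.continuous_deriv one_le_two
  obtain ⟨t, ht⟩ := exists_notMem_ball_of_hasDerivAt_smul hw (r := r) (δ := δ) (K := 2 * M)
    hrδ (by positivity) hγ' (fun t => hode t ▸ hγ'' t)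
    (by fun_prop) hγ0 hγ'0 (fun t ht => by
      have hinner := real_inner_le_norm (A (γ t)) (deriv γ t)
      have hAM := mul_le_mul_of_nonneg_right (hδM ht) (norm_nonneg (deriv γ t))
      simp only [Complex.inner, Complex.mul_re, Complex.conj_re, Complex.conj_im] at hinner
      linarith)
  exact ht (hball t)

theorem eq_zero_of_forall_not_eventually_norm_le {X E F : Type*} [TopologicalSpace X]
    [NormedAddCommGroup E] [NormedAddCommGroup F] {A : X → E} {φ : X → F} {s : Set X} {w : X}
    {K : ℝ} (hK : 0 ≤ K) (hφ : ContinuousAt φ w) (hAφ : ∀ z ∈ s, ‖A z‖ ≤ K / ‖φ z‖)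
    (hA : ∀ M, ¬∀ᶠ z in 𝓝[s] w, ‖A z‖ ≤ M) : φ w = 0 := by
  by_contra hw
  have hpos : 0 < ‖φ w‖ / 2 := half_pos (norm_pos_iff.2 hw)
  refine hA (K / (‖φ w‖ / 2)) ?_
  filter_upwards [nhdsWithin_le_nhds
    (hφ.norm.eventually (lt_mem_nhds (half_lt_self (norm_pos_iff.2 hw)))),
    self_mem_nhdsWithin] with z hz hzs
  exact (hAφ z hzs).trans (div_le_div_of_nonneg_left hK hpos hz.le)

theorem GeodesicallyComplete.mul_add_one_eq_zero {f g A : ℂ → ℂ} {P : Set ℂ}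
    (hcomplete : GeodesicallyComplete A) (hAc : ContinuousOn A (ball 0 1))
    (hA : ∀ z ∈ ball (0 : ℂ) 1, z ∉ P → A z = -2 / (conj z + f z)) (hA0 : ∀ z ∈ P, A z = 0)
    (hgf : ∀ z ∈ ball (0 : ℂ) 1, g z = f z) {w : ℂ} (hw : ‖w‖ = 1) (hgw : ContinuousAt g w) :
    w * g w + 1 = 0 := by
  have hAφ : ∀ z ∈ ball (0 : ℂ) 1, ‖A z‖ ≤ 2 / ‖conj z + g z‖ := fun z hz => by
    by_cases hzP : z ∈ P
    · rw [hA0 z hzP, norm_zero]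
      positivity
    · simp [hA z hz hzP, hgf z hz]
  have h : conj w + g w = 0 := eq_zero_of_forall_not_eventually_norm_le
    (φ := fun z => conj z + g z) zero_le_two
    (Complex.continuous_conj.continuousAt.add hgw) hAφ (hcomplete.not_eventually_norm_le hAc hw)
  have hwc : w * conj w = 1 := by simp [Complex.mul_conj', hw]
  linear_combination w * h - hwc

theorem isPreconnected_ball_union_ball {E : Type*} [NormedAddCommGroup E] [NormedSpace ℝ E]
    {x y : E} {r ε : ℝ} (hy : y ∈ closure (ball x r)) (hε : 0 < ε) :
    IsPreconnected (ball x r ∪ ball y ε) := by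
  obtain ⟨b, hb, hyb⟩ := Metric.mem_closure_iff.1 hy ε hε
  exact (convex_ball x r).isPreconnected.union b hb (mem_ball_comm.1 hyb)
    (convex_ball y ε).isPreconnected

theorem Complex.accPt_sphere {c z : ℂ} {r : ℝ} (hr : 0 < r) (hz : z ∈ sphere c r) :
    AccPt z (𝓟 (sphere c r)) :=
  (isPreconnected_sphere (by simp) c r).preperfect_of_nontrivial
    ⟨c + r, by simp [hr.le], c - r, by simp [hr.le], fun h => by
      have := congrArg Complex.re h
      simp only [Complex.add_re, Complex.ofReal_re, Complex.sub_re] at this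
      linarith⟩ z hz

theorem MeromorphicAt.eventuallyEq_zero_of_accPt {𝕜 E : Type*} [NontriviallyNormedField 𝕜]
    [NormedAddCommGroup E] [NormedSpace 𝕜 E] {f : 𝕜 → E} {x : 𝕜} {S : Set 𝕜}
    (hf : MeromorphicAt f x) (hS : AccPt x (𝓟 S)) (h : ∀ᶠ y in 𝓝[≠] x, y ∈ S → f y = 0) :
    f =ᶠ[𝓝[≠] x] 0 :=
  hf.frequently_zero_iff_eventuallyEq_zero.1
    (((accPt_iff_frequently_nhdsNE.1 hS).and_eventually h).mono fun _ hy => hy.2 hy.1)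

theorem eq_neg_one_div_of_eventually_mul_add_one_eq_zero {f A : ℂ → ℂ} {P : Set ℂ}
    (hPdef : ∀ z ∈ ball (0 : ℂ) 1, (z ∈ P ↔ ¬AnalyticAt ℂ f z))
    (hA : ∀ z ∈ ball (0 : ℂ) 1, z ∉ P → A z = -2 / (conj z + f z)) (hA0 : ∀ z ∈ P, A z = 0)
    {z : ℂ} (hz : z ∈ ball (0 : ℂ) 1) (hz0 : z ≠ 0) (hAz : ContinuousAt A z)
    (hev : ∀ᶠ x in 𝓝[≠] z, x * f x + 1 = 0) : f z = -1 / z := by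
  have hf : ∀ᶠ x in 𝓝[≠] z, f x = -x⁻¹ := by
    filter_upwards [hev, nhdsWithin_le_nhds (eventually_ne_nhds hz0)] with x hx hx0
    field_simp
    linear_combination hx
  have hfan : ∀ᶠ x in 𝓝[≠] z, AnalyticAt ℂ f x := by
    filter_upwards [eventually_eventually_nhdsWithin.2 hf, self_mem_nhdsWithin,
      nhdsWithin_le_nhds (eventually_ne_nhds hz0)] with x hx hxz hx0
    rw [nhdsWithin_eq_nhds.2 (isOpen_compl_singleton.mem_nhds hxz)] at hx
    exact ((analyticAt_id.inv hx0).neg).congr (hx.mono fun y hy => hy.symm)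
  have hAev : A =ᶠ[𝓝[≠] z] fun x => -2 / (conj x - x⁻¹) := by
    filter_upwards [hf, hfan, nhdsWithin_le_nhds (isOpen_ball.mem_nhds hz)] with x hfx hxan hx
    rw [hA x hx (fun hxP => (hPdef x hx).1 hxP hxan), hfx, sub_eq_add_neg]
  have hden : conj z - z⁻¹ ≠ 0 := by
    rw [sub_ne_zero]
    intro h
    have hnorm : (‖z‖ ^ 2 : ℂ) = 1 := by rw [← Complex.conj_mul', h, inv_mul_cancel₀ hz0]
    rw [mem_ball_zero_iff] at hz
    nlinarith [norm_nonneg z, (by exact_mod_cast hnorm : ‖z‖ ^ 2 = 1)]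
  have hAz' : A z = -2 / (conj z - z⁻¹) := tendsto_nhds_unique
    (hAz.continuousWithinAt.tendsto.congr' hAev)
    ((continuousAt_const.div (Complex.continuous_conj.continuousAt.sub
      (continuousAt_id.inv₀ hz0)) hden).continuousWithinAt.tendsto)
  have hAz0 : A z ≠ 0 := hAz' ▸ div_ne_zero (neg_ne_zero.2 two_ne_zero) hden
  have hzP : z ∉ P := fun hzP => hAz0 (hA0 z hzP)
  have hnv : conj z + f z ≠ 0 := fun h => hAz0 (by rw [hA z hz hzP, h, div_zero])
  rw [hA z hz hzP, div_eq_div_iff hnv hden] at hAz'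
  rw [neg_div, one_div]
  linear_combination hAz' / 2

theorem stmt19_general (f : ℂ → ℂ)
    (P : Set ℂ)
    (hPdef : ∀ z ∈ Metric.ball (0 : ℂ) 1, (z ∈ P ↔ ¬AnalyticAt ℂ f z))
    (A : ℂ → ℂ) (hAsmooth : ContDiffOn ℝ (⊤ : ℕ∞) A (Metric.ball (0 : ℂ) 1))
    (hA : ∀ z ∈ Metric.ball (0 : ℂ) 1, z ∉ P → A z = -2 / (conj z + f z))
    (hA0 : ∀ z ∈ P, A z = 0)
    (hcomplete : ∀ x₀ ∈ Metric.ball (0 : ℂ) 1, ∀ v₀ : ℂ,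
      ∃ γ : ℝ → ℂ, ContDiff ℝ 2 γ ∧ γ 0 = x₀ ∧ deriv γ 0 = v₀ ∧
        (∀ t : ℝ, γ t ∈ Metric.ball (0 : ℂ) 1) ∧
        ∀ t : ℝ, deriv (deriv γ) t =
          (-2 * ((A (γ t)).re * (deriv γ t).re + (A (γ t)).im * (deriv γ t).im))
            • deriv γ t) :
    (∀ z ∈ Metric.ball (0 : ℂ) 1, z ≠ 0 → f z = -1 / z) ∨
    ¬∃ (z₀ : ℂ) (ε : ℝ) (g : ℂ → ℂ), ‖z₀‖ = 1 ∧ 0 < ε ∧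
      MeromorphicOn g (Metric.ball (0 : ℂ) 1 ∪ Metric.ball z₀ ε) ∧
      ∀ z ∈ Metric.ball (0 : ℂ) 1, g z = f z := by
  refine or_iff_not_imp_right.2 fun hext => ?_
  obtain ⟨z₀, ε, g, hz₀, hε, hg, hgf⟩ := not_not.1 hext
  have hAc : ContinuousOn A (ball 0 1) := hAsmooth.continuousOn
  set U := ball (0 : ℂ) 1 ∪ ball z₀ ε
  have hz₀U : z₀ ∈ U := Or.inr (mem_ball_self hε)
  have hh : MeromorphicOn (fun x => x * g x + 1) U :=
    (MeromorphicOn.id.mul hg).add (MeromorphicOn.const 1)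
  have hz₀top : meromorphicOrderAt (fun x => x * g x + 1) z₀ = ⊤ := by
    rw [meromorphicOrderAt_eq_top_iff]
    refine (hh z₀ hz₀U).eventuallyEq_zero_of_accPt
      (Complex.accPt_sphere (c := 0) one_pos (by simpa using hz₀)) ?_
    filter_upwards [(hg z₀ hz₀U).eventually_analyticAt] with w hgw hw
    exact GeodesicallyComplete.mul_add_one_eq_zero hcomplete hAc hA hA0 hgf (by simpa using hw)
      hgw.continuousAt
  have hU : IsPreconnected U := isPreconnected_ball_union_ball
    (by rw [closure_ball 0 one_ne_zero, mem_closedBall_zero_iff]; exact hz₀.le) hε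
  intro z hz hz0
  have hztop : meromorphicOrderAt (fun x => x * g x + 1) z = ⊤ := not_not.1 fun h =>
    hh.meromorphicOrderAt_ne_top_of_isPreconnected hU (Or.inl hz) hz₀U h hz₀top
  refine eq_neg_one_div_of_eventually_mul_add_one_eq_zero hPdef hA hA0 hz hz0
    (hAc.continuousAt (isOpen_ball.mem_nhds hz)) ?_
  filter_upwards [meromorphicOrderAt_eq_top_iff.1 hztop,
    nhdsWithin_le_nhds (isOpen_ball.mem_nhds hz)] with x hx hxb
  rwa [← hgf x hxb]

/-- Dichotomy for geodesically complete weakly stiff connections on the unit disk: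
if `f` is meromorphic on `𝔻` with pole set `P`, `z̄ + f(z)` never vanishes, `A` is the
smooth function equal to `−2/(z̄ + f(z))` off `P` and `0` on `P`, and the associated
connection (with geodesic equation `γ'' = −2(Re A(γ)·γ₁' + Im A(γ)·γ₂')γ'`) is
geodesically complete, then either `f(z) = −1/z` on `𝔻∖{0}` or `f` extends
meromorphically to no boundary point of `𝔻`. -/
theorem stmt19 (f : ℂ → ℂ) (hf : MeromorphicOn f (Metric.ball (0 : ℂ) 1))
    (P : Set ℂ) (hP : P ⊆ Metric.ball (0 : ℂ) 1)
    (hPdef : ∀ z ∈ Metric.ball (0 : ℂ) 1, (z ∈ P ↔ ¬AnalyticAt ℂ f z))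
    (hnv : ∀ z ∈ Metric.ball (0 : ℂ) 1, z ∉ P → conj z + f z ≠ 0)
    (A : ℂ → ℂ) (hAsmooth : ContDiffOn ℝ (⊤ : ℕ∞) A (Metric.ball (0 : ℂ) 1))
    (hA : ∀ z ∈ Metric.ball (0 : ℂ) 1, z ∉ P → A z = -2 / (conj z + f z))
    (hA0 : ∀ z ∈ P, A z = 0)
    (hcomplete : ∀ x₀ ∈ Metric.ball (0 : ℂ) 1, ∀ v₀ : ℂ,
      ∃ γ : ℝ → ℂ, ContDiff ℝ 2 γ ∧ γ 0 = x₀ ∧ deriv γ 0 = v₀ ∧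
        (∀ t : ℝ, γ t ∈ Metric.ball (0 : ℂ) 1) ∧
        ∀ t : ℝ, deriv (deriv γ) t =
          (-2 * ((A (γ t)).re * (deriv γ t).re + (A (γ t)).im * (deriv γ t).im))
            • deriv γ t) :
    (∀ z ∈ Metric.ball (0 : ℂ) 1, z ≠ 0 → f z = -1 / z) ∨
    ¬∃ (z₀ : ℂ) (ε : ℝ) (g : ℂ → ℂ), ‖z₀‖ = 1 ∧ 0 < ε ∧
      MeromorphicOn g (Metric.ball (0 : ℂ) 1 ∪ Metric.ball z₀ ε) ∧
      ∀ z ∈ Metric.ball (0 : ℂ) 1, g z = f z :=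
  stmt19_general f P hPdef A hAsmooth hA hA0 hcomplete
end
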